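/- arXiv:2306.15844 — 4 statements merged into one kernel-verified Lean document; each statement's English description precedes it below -/
import Mathlib

section
/- Let W : [0,1]² → {0,1} be measurable with support W⁺, and let Wⁿ be its L²-projection onto piecewise constant functions on the uniform n×n grid of [0,1]². Then for any p ≥ 1, ‖W − Wⁿ‖_{Lᵖ([0,1]²)}^p ≤ N(∂W⁺, n) · n^{−2}, where N(∂W⁺, n) is the number of grid cells [(i−1)/n, i/n) × [(j−1)/n, j/n), i,j ∈ [n], that intersect the boundary ∂W⁺ of the support of W. -/
open MeasureTheory Set

/-- A grid cell of the uniform `n × n` grid on `[0,1]²`. -/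
def gridCell (n : ℕ) (i j : Fin n) : Set (ℝ × ℝ) :=
  Ico ((i : ℝ) / n) (((i : ℝ) + 1) / n) ×ˢ Ico ((j : ℝ) / n) (((j : ℝ) + 1) / n)

/-- The `L²`-projection of `W` onto piecewise constant functions on the uniform
`n × n` grid: on each grid cell it equals the average of `W` over that cell. -/
noncomputable def gridProj (n : ℕ) (W : ℝ × ℝ → ℝ) : ℝ × ℝ → ℝ := fun z =>
  ∑ i : Fin n, ∑ j : Fin n,
    (gridCell n i j).indicator (fun _ => ⨍ y in gridCell n i j, W y) z

lemma gridCell_measurableSet (n : ℕ) (i j : Fin n) : MeasurableSet (gridCell n i j) :=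
  measurableSet_Ico.prod measurableSet_Ico

lemma ico_unique {n : ℕ} (hn : 0 < n) {i i' : Fin n} {x : ℝ}
    (h : x ∈ Ico ((i:ℝ)/n) (((i:ℝ)+1)/n)) (h' : x ∈ Ico ((i':ℝ)/n) (((i':ℝ)+1)/n)) :
    i = i' := by
  have hn' : (0:ℝ) < n := by exact_mod_cast hn
  have h1 : (i:ℝ) < (i':ℝ) + 1 := by
    have := lt_of_le_of_lt h.1 h'.2
    exact (div_lt_div_iff_of_pos_right hn').mp this
  have h2 : (i':ℝ) < (i:ℝ) + 1 := by
    have := lt_of_le_of_lt h'.1 h.2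
    exact (div_lt_div_iff_of_pos_right hn').mp this
  have h1' : (i:ℕ) < (i':ℕ) + 1 := by exact_mod_cast h1
  have h2' : (i':ℕ) < (i:ℕ) + 1 := by exact_mod_cast h2
  exact Fin.ext (by omega)

lemma gridCell_unique {n : ℕ} (hn : 0 < n) {i j i' j' : Fin n} {z : ℝ × ℝ}
    (h : z ∈ gridCell n i j) (h' : z ∈ gridCell n i' j') : i = i' ∧ j = j' :=
  ⟨ico_unique hn h.1 h'.1, ico_unique hn h.2 h'.2⟩

lemma gridCell_volume (n : ℕ) (i j : Fin n) :
    volume (gridCell n i j) = ENNReal.ofReal (1/n) * ENNReal.ofReal (1/n) := by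
  rw [gridCell, Measure.volume_eq_prod, Measure.prod_prod, Real.volume_Ico, Real.volume_Ico]
  congr 2 <;> rw [div_sub_div_same] <;> ring_nf

lemma gridProj_eq_on {n : ℕ} (hn : 0 < n) (W : ℝ × ℝ → ℝ) {i j : Fin n} {z : ℝ × ℝ}
    (hz : z ∈ gridCell n i j) :
    gridProj n W z = ⨍ y in gridCell n i j, W y := by
  rw [gridProj]
  rw [Finset.sum_eq_single i]
  · rw [Finset.sum_eq_single j]
    · exact indicator_of_mem hz _
    · intro j' _ hj'
      apply indicator_of_notMem
      intro hz'
      exact hj' (gridCell_unique hn hz' hz).2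
    · simp
  · intro i' _ hi'
    apply Finset.sum_eq_zero
    intro j' _
    apply indicator_of_notMem
    intro hz'
    exact hi' (gridCell_unique hn hz' hz).1
  · simp

lemma square_eq_iUnion (n : ℕ) (hn : 0 < n) :
    Ico (0:ℝ) 1 ×ˢ Ico (0:ℝ) 1 = ⋃ ij : Fin n × Fin n, gridCell n ij.1 ij.2 := by
  have hn' : (0:ℝ) < n := by exact_mod_cast hn
  ext z
  simp only [mem_iUnion, mem_prod, mem_Ico]
  constructor
  · rintro ⟨⟨h01, h11⟩, ⟨h02, h12⟩⟩
    have key : ∀ x : ℝ, 0 ≤ x → x < 1 → ∃ i : Fin n, (i:ℝ)/n ≤ x ∧ x < ((i:ℝ)+1)/n := by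
      intro x hx0 hx1
      have hfl : ⌊x * n⌋₊ < n := by
        apply Nat.floor_lt (by positivity) |>.2
        calc x * n < 1 * n := by nlinarith
        _ = n := one_mul _
      refine ⟨⟨⌊x * n⌋₊, hfl⟩, ?_, ?_⟩
      · rw [div_le_iff₀ hn']
        exact_mod_cast Nat.floor_le (by positivity)
      · rw [lt_div_iff₀ hn']
        exact_mod_cast Nat.lt_floor_add_one (x * n)
    obtain ⟨i, hi1, hi2⟩ := key z.1 h01 h11
    obtain ⟨j, hj1, hj2⟩ := key z.2 h02 h12
    exact ⟨⟨i, j⟩, ⟨hi1, hi2⟩, ⟨hj1, hj2⟩⟩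
  · rintro ⟨⟨i, j⟩, ⟨h1, h2⟩, ⟨h3, h4⟩⟩
    have hi0 : (0:ℝ) ≤ (i:ℝ)/n := by positivity
    have hj0 : (0:ℝ) ≤ (j:ℝ)/n := by positivity
    have hi1 : ((i:ℝ)+1)/n ≤ 1 := by
      rw [div_le_one hn']
      have : (i:ℕ) < n := i.2
      exact_mod_cast Nat.succ_le_of_lt this
    have hj1 : ((j:ℝ)+1)/n ≤ 1 := by
      rw [div_le_one hn']
      have : (j:ℕ) < n := j.2
      exact_mod_cast Nat.succ_le_of_lt this
    exact ⟨⟨le_trans hi0 h1, lt_of_lt_of_le h2 hi1⟩, ⟨le_trans hj0 h3, lt_of_lt_of_le h4 hj1⟩⟩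

open scoped Classical in
theorem stmt0 (n : ℕ) (hn : 0 < n) (W : ℝ × ℝ → ℝ) (hW : Measurable W)
    (hvals : ∀ z, W z = 0 ∨ W z = 1) (p : ℝ) (hp : 1 ≤ p) :
    ∫ z in Ico (0:ℝ) 1 ×ˢ Ico (0:ℝ) 1, |W z - gridProj n W z| ^ p ∂volume ≤
      ((Finset.univ.filter (fun ij : Fin n × Fin n =>
          (gridCell n ij.1 ij.2 ∩ frontier (Function.support W)).Nonempty)).card : ℝ)
        / n ^ 2 := by
  have hn' : (0:ℝ) < n := by exact_mod_cast hn
  have hp0 : (0:ℝ) < p := lt_of_lt_of_le one_pos hp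
  -- basic facts about W
  have hW0 : ∀ z, 0 ≤ W z := fun z => by rcases hvals z with h | h <;> rw [h] <;> norm_num
  have hW1 : ∀ z, W z ≤ 1 := fun z => by rcases hvals z with h | h <;> rw [h] <;> norm_num
  -- volume of a cell
  have hvol : ∀ i j : Fin n, volume (gridCell n i j) = ENNReal.ofReal (1/n) * ENNReal.ofReal (1/n) :=
    fun i j => gridCell_volume n i j
  have hvolne : ∀ i j : Fin n, volume (gridCell n i j) ≠ 0 := by
    intro i j
    rw [hvol i j]
    have : ENNReal.ofReal (1/n) ≠ 0 := by
      simp only [ne_eq, ENNReal.ofReal_eq_zero, not_le]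
      positivity
    exact mul_ne_zero this this
  have hvolfin : ∀ i j : Fin n, volume (gridCell n i j) ≠ ⊤ := by
    intro i j; rw [hvol i j]; exact ENNReal.mul_ne_top ENNReal.ofReal_ne_top ENNReal.ofReal_ne_top
  have hvolreal : ∀ i j : Fin n, (volume (gridCell n i j)).toReal = 1 / n^2 := by
    intro i j
    rw [hvol i j, ENNReal.toReal_mul, ENNReal.toReal_ofReal (by positivity)]
    field_simp
  -- average is in [0,1]
  have hWint : ∀ i j : Fin n, IntegrableOn W (gridCell n i j) := by
    intro i j
    exact Measure.integrableOn_of_bounded (hvolfin i j) hW.aestronglyMeasurable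
      (Filter.Eventually.of_forall fun z => by
        rw [Real.norm_eq_abs, abs_of_nonneg (hW0 z)]; exact hW1 z)
  have havg : ∀ i j : Fin n, (⨍ y in gridCell n i j, W y) ∈ Icc (0:ℝ) 1 := by
    intro i j
    rw [setAverage_eq]
    constructor
    · apply smul_nonneg
      · positivity
      · exact setIntegral_nonneg (gridCell_measurableSet n i j) fun z _ => hW0 z
    · have hle : ∫ y in gridCell n i j, W y ≤ (volume (gridCell n i j)).toReal := by
        have := norm_setIntegral_le_of_norm_le_const (μ := volume)
          (lt_top_iff_ne_top.2 (hvolfin i j)) (C := 1)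
          (fun z _ => by rw [Real.norm_eq_abs, abs_of_nonneg (hW0 z)]; exact hW1 z)
        calc ∫ y in gridCell n i j, W y ≤ ‖∫ y in gridCell n i j, W y‖ := le_abs_self _
        _ ≤ 1 * (volume (gridCell n i j)).toReal := this
        _ = _ := one_mul _
      rw [smul_eq_mul]
      calc (volume (gridCell n i j)).toReal⁻¹ * ∫ y in gridCell n i j, W y
          ≤ (volume (gridCell n i j)).toReal⁻¹ * (volume (gridCell n i j)).toReal := by
            apply mul_le_mul_of_nonneg_left hle (by positivity)
        _ = 1 := by
            rw [inv_mul_cancel₀]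
            rw [hvolreal i j]; positivity
  -- the integrand
  set f : ℝ × ℝ → ℝ := fun z => |W z - gridProj n W z| ^ p with hf
  have hproj_meas : Measurable (gridProj n W) := by
    apply Finset.measurable_sum
    intro i _
    apply Finset.measurable_sum
    intro j _
    exact Measurable.indicator measurable_const (gridCell_measurableSet n i j)
  have hf_meas : Measurable f :=
    (Real.continuous_rpow_const (le_of_lt hp0)).measurable.comp ((hW.sub hproj_meas).abs)
  -- bound on f on each cell
  have hf_bound : ∀ (i j : Fin n), ∀ z ∈ gridCell n i j, f z ≤ 1 := by
    intro i j z hz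
    rw [hf]
    simp only
    rw [gridProj_eq_on hn W hz]
    obtain ⟨ha0, ha1⟩ := havg i j
    have : |W z - ⨍ y in gridCell n i j, W y| ≤ 1 := by
      rcases hvals z with h | h <;> rw [h] <;> rw [abs_le] <;> constructor <;> linarith
    exact Real.rpow_le_one (abs_nonneg _) this (le_of_lt hp0)
  have hf_nonneg : ∀ z, 0 ≤ f z := fun z => Real.rpow_nonneg (abs_nonneg _) p
  -- rewrite square as union and the integral as a sum
  rw [square_eq_iUnion n hn]
  have hd : Pairwise (Function.onFun Disjoint fun ij : Fin n × Fin n => gridCell n ij.1 ij.2) := by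
    intro ij ij' hne
    rw [Function.onFun, Set.disjoint_left]
    intro z hz hz'
    obtain ⟨h1, h2⟩ := gridCell_unique hn hz hz'
    exact hne (Prod.ext h1 h2)
  have hm : ∀ ij : Fin n × Fin n, MeasurableSet (gridCell n ij.1 ij.2) :=
    fun ij => gridCell_measurableSet n ij.1 ij.2
  have hUfin : volume (⋃ ij : Fin n × Fin n, gridCell n ij.1 ij.2) ≠ ⊤ := by
    rw [← square_eq_iUnion n hn, Measure.volume_eq_prod, Measure.prod_prod, Real.volume_Ico]
    simp
  have hfint : IntegrableOn f (⋃ ij : Fin n × Fin n, gridCell n ij.1 ij.2) := by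
    apply Measure.integrableOn_of_bounded hUfin hf_meas.aestronglyMeasurable (M := 1)
    rw [ae_restrict_iff' (MeasurableSet.iUnion hm)]
    apply Filter.Eventually.of_forall
    intro z hz
    rw [mem_iUnion] at hz
    obtain ⟨ij, hij⟩ := hz
    rw [Real.norm_eq_abs, abs_of_nonneg (hf_nonneg z)]
    exact hf_bound ij.1 ij.2 z hij
  rw [integral_iUnion hm hd hfint, tsum_fintype]
  -- bound each cell integral
  have key : ∀ ij : Fin n × Fin n,
      ∫ z in gridCell n ij.1 ij.2, f z ≤
        if (gridCell n ij.1 ij.2 ∩ frontier (Function.support W)).Nonempty then 1/(n:ℝ)^2 else 0 := by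
    intro ij
    obtain ⟨i, j⟩ := ij
    by_cases hcase : (gridCell n i j ∩ frontier (Function.support W)).Nonempty
    · rw [if_pos hcase]
      have hb : ∀ᵐ z ∂volume, z ∈ gridCell n i j → ‖f z‖ ≤ 1 :=
        Filter.Eventually.of_forall fun z hz => by
          rw [Real.norm_eq_abs, abs_of_nonneg (hf_nonneg z)]
          exact hf_bound i j z hz
      calc ∫ z in gridCell n i j, f z ≤ ‖∫ z in gridCell n i j, f z‖ := le_abs_self _
        _ ≤ 1 * (volume (gridCell n i j)).toReal :=
          norm_setIntegral_le_of_norm_le_const_ae' (lt_top_iff_ne_top.2 (hvolfin i j))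
            hb
        _ = 1/(n:ℝ)^2 := by rw [one_mul, hvolreal i j]
    · rw [if_neg hcase]
      -- W is constant on the cell
      rw [not_nonempty_iff_eq_empty] at hcase
      have hsub : gridCell n i j ⊆
          interior (Function.support W) ∪ interior (Function.support W)ᶜ := by
        intro z hz
        have hzf : z ∉ frontier (Function.support W) := by
          intro hzf
          exact absurd (mem_inter hz hzf) (by rw [hcase]; exact notMem_empty z)
        rw [frontier_eq_closure_inter_closure] at hzf
        simp only [mem_inter_iff, not_and] at hzf
        by_cases hcl : z ∈ closure (Function.support W)
        · left
          have hz2 : z ∈ (closure (Function.support W)ᶜ)ᶜ := hzf hcl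
          rwa [closure_compl, compl_compl] at hz2
        · right
          rw [interior_compl]
          exact hcl
      have hconn : IsPreconnected (gridCell n i j) :=
        ((convex_Ico _ _).prod (convex_Ico _ _)).isPreconnected
      have hdisj : Disjoint (interior (Function.support W))
          (interior (Function.support W)ᶜ) :=
        Disjoint.mono interior_subset interior_subset disjoint_compl_right
      have hconst : ∃ c : ℝ, (∀ z ∈ gridCell n i j, W z = c) := by
        rcases hconn.subset_or_subset isOpen_interior isOpen_interior hdisj
          hsub with hs | hs
        · refine ⟨1, fun z hz => ?_⟩
          have : z ∈ Function.support W := interior_subset (hs hz)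
          rcases hvals z with h | h
          · exact absurd h this
          · exact h
        · refine ⟨0, fun z hz => ?_⟩
          have : z ∉ Function.support W := fun hmem => (interior_subset (hs hz)) hmem
          simpa [Function.mem_support, not_not] using this
      obtain ⟨c, hc⟩ := hconst
      have hae : W =ᵐ[volume.restrict (gridCell n i j)] fun _ => c := by
        rw [Filter.EventuallyEq, ae_restrict_iff' (gridCell_measurableSet n i j)]
        exact Filter.Eventually.of_forall hc
      have havgc : (⨍ y in gridCell n i j, W y) = c := by
        rw [average_congr hae, setAverage_const (hvolne i j) (hvolfin i j)]
      have hzero : ∀ z ∈ gridCell n i j, f z = 0 := by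
        intro z hz
        rw [hf]
        simp only
        rw [gridProj_eq_on hn W hz, havgc, hc z hz, sub_self, abs_zero,
          Real.zero_rpow (ne_of_gt hp0)]
      rw [setIntegral_congr_fun (gridCell_measurableSet n i j) hzero, integral_zero]
  calc ∑ ij : Fin n × Fin n, ∫ z in gridCell n ij.1 ij.2, f z
      ≤ ∑ ij : Fin n × Fin n,
        (if (gridCell n ij.1 ij.2 ∩ frontier (Function.support W)).Nonempty
          then 1/(n:ℝ)^2 else 0) := Finset.sum_le_sum fun ij _ => key ij
    _ = ∑ ij ∈ Finset.univ.filter (fun ij : Fin n × Fin n =>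
        (gridCell n ij.1 ij.2 ∩ frontier (Function.support W)).Nonempty), (1/(n:ℝ)^2) := by
        rw [Finset.sum_filter]
    _ = ((Finset.univ.filter (fun ij : Fin n × Fin n =>
        (gridCell n ij.1 ij.2 ∩ frontier (Function.support W)).Nonempty)).card : ℝ) / n ^ 2 := by
        rw [Finset.sum_const, nsmul_eq_mul]
        ring
end

section
/- Let Q = [0,1]^d and f ∈ Lip(Lᵖ(Q), α) for some α ∈ (0,1] and 1 ≤ p < ∞. Let f^m denote the L²-projection of f onto piecewise constant functions on the dyadic grid of mesh 2^{−m}. Then ‖f^{m+1} − f^m‖_{Lᵖ(Q)} ≤ (2^d − 1)^{1/p} · d^{α/2} · 2^{−α(m+1)} · ‖f‖_{Lip(Lᵖ(Q),α)}. -/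
open MeasureTheory Set

/-- The unit cube `Q = [0,1]^d`. -/
def unitCube (d : ℕ) : Set (Fin d → ℝ) := Icc 0 1

/-- A cell of the uniform grid of mesh `1/n` on the unit cube. -/
def cubeCell (d n : ℕ) (w : Fin d → Fin n) : Set (Fin d → ℝ) :=
  univ.pi fun k => Ico ((w k : ℝ) / n) (((w k : ℝ) + 1) / n)

/-- The `L²`-projection onto piecewise constant functions on the uniform grid of
mesh `1/n`: on each grid cell it equals the average of `f` over that cell. -/
noncomputable def cubeProj (d n : ℕ) (f : (Fin d → ℝ) → ℝ) : (Fin d → ℝ) → ℝ := fun x =>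
  ∑ w : Fin d → Fin n,
    (cubeCell d n w).indicator (fun _ => ⨍ y in cubeCell d n w, f y) x

/-- The `Lᵖ`-modulus of continuity `ω_p(f, δ)`; the norm `‖h‖` on `Fin d → ℝ`
is the `ℓ^∞`-norm, and `Q'_h = {x ∈ Q : x + h ∈ Q}`. -/
noncomputable def modulusLp (d : ℕ) (p : ℝ) (f : (Fin d → ℝ) → ℝ) (δ : ℝ) : ℝ :=
  ⨆ h : {h : Fin d → ℝ // ‖h‖ ≤ δ},
    (∫ x in {x ∈ unitCube d | x + h.1 ∈ unitCube d}, |f x - f (x + h.1)| ^ p ∂volume) ^ (1 / p)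

/-- Membership in the generalized Lipschitz space `Lip(Lᵖ(Q), α)`. -/
def MemLipLp (d : ℕ) (p α : ℝ) (f : (Fin d → ℝ) → ℝ) : Prop :=
  ∃ C : ℝ, ∀ δ > 0, modulusLp d p f δ ≤ C * δ ^ α

/-- The norm `‖f‖_{Lip(Lᵖ(Q), α)} = sup_{δ>0} δ^{−α} ω_p(f, δ)`. -/
noncomputable def lipLpNorm (d : ℕ) (p α : ℝ) (f : (Fin d → ℝ) → ℝ) : ℝ :=
  ⨆ δ : {δ : ℝ // 0 < δ}, (δ.1) ^ (-α) * modulusLp d p f δ.1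

lemma mem_cell_iff {d n : ℕ} {w : Fin d → Fin n} {x : Fin d → ℝ} :
    x ∈ cubeCell d n w ↔ ∀ k, (w k : ℝ) / n ≤ x k ∧ x k < ((w k : ℝ) + 1) / n := by
  simp [cubeCell, mem_Ico]

lemma cell_measurable {d n : ℕ} (w : Fin d → Fin n) : MeasurableSet (cubeCell d n w) :=
  MeasurableSet.univ_pi fun _ => measurableSet_Ico

lemma cell_subset_unitCube {d n : ℕ} (hn : 0 < n) (w : Fin d → Fin n) :
    cubeCell d n w ⊆ unitCube d := by
  intro x hx
  rw [mem_cell_iff] at hx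
  constructor <;> intro k
  · have := (hx k).1
    have : (0:ℝ) ≤ (w k : ℝ) / n := by positivity
    simp only [Pi.zero_apply]
    linarith [(hx k).1]
  · have h2 := (hx k).2
    have hwk : ((w k : ℝ) + 1) ≤ n := by
      have := (w k).2; exact_mod_cast Nat.succ_le_of_lt this
    have hn' : (0:ℝ) < n := by exact_mod_cast hn
    have : ((w k : ℝ) + 1) / n ≤ 1 := by
      rw [div_le_one hn']; exact hwk
    simp only [Pi.one_apply]
    linarith

lemma volume_cell {d n : ℕ} (hn : 0 < n) (w : Fin d → Fin n) :
    volume (cubeCell d n w) = ENNReal.ofReal ((n:ℝ)⁻¹) ^ d := by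
  rw [cubeCell, volume_pi_pi]
  have hn' : (0:ℝ) < n := by exact_mod_cast hn
  have : ∀ k, volume (Ico ((w k : ℝ) / n) (((w k : ℝ) + 1) / n)) = ENNReal.ofReal ((n:ℝ)⁻¹) := by
    intro k
    rw [Real.volume_Ico]
    congr 1
    field_simp; ring
  simp [this]

lemma cell_eq_of_mem {d n : ℕ} {w w' : Fin d → Fin n} {x : Fin d → ℝ}
    (h : x ∈ cubeCell d n w) (h' : x ∈ cubeCell d n w') : w = w' := by
  rw [mem_cell_iff] at h h'
  funext k
  have hn' : (0:ℝ) < n := by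
    rcases Nat.eq_zero_or_pos n with h0 | h0
    · subst h0; exact (w k).elim0
    · exact_mod_cast h0
  have h1 := (h k).1; have h2 := (h k).2; have h3 := (h' k).1; have h4 := (h' k).2
  have e1 : ((w k : ℕ) : ℝ) < (w' k : ℕ) + 1 := by
    have := lt_of_le_of_lt h1 h4
    rwa [div_lt_div_iff_of_pos_right hn'] at this
  have e2 : ((w' k : ℕ) : ℝ) < (w k : ℕ) + 1 := by
    have := lt_of_le_of_lt h3 h2
    rwa [div_lt_div_iff_of_pos_right hn'] at this
  have e1' : (w k : ℕ) < (w' k : ℕ) + 1 := by exact_mod_cast e1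
  have e2' : (w' k : ℕ) < (w k : ℕ) + 1 := by exact_mod_cast e2
  exact Fin.ext (by omega)

lemma cell_disjoint {d n : ℕ} {w w' : Fin d → Fin n} (h : w ≠ w') :
    Disjoint (cubeCell d n w) (cubeCell d n w') := by
  rw [Set.disjoint_left]
  intro x hx hx'
  exact h (cell_eq_of_mem hx hx')

lemma iUnion_cells {d n : ℕ} (hn : 0 < n) :
    (⋃ w : Fin d → Fin n, cubeCell d n w) = univ.pi fun _ : Fin d => Ico (0:ℝ) 1 := by
  have hn' : (0:ℝ) < n := by exact_mod_cast hn
  apply Set.Subset.antisymm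
  · rintro x ⟨_, ⟨w, rfl⟩, hx⟩
    rw [mem_cell_iff] at hx
    intro k _
    constructor
    · have : (0:ℝ) ≤ (w k : ℝ) / n := by positivity
      linarith [(hx k).1]
    · have hwk : ((w k : ℝ) + 1) ≤ n := by
        have := (w k).2; exact_mod_cast Nat.succ_le_of_lt this
      have : ((w k : ℝ) + 1) / n ≤ 1 := by rw [div_le_one hn']; exact hwk
      linarith [(hx k).2]
  · intro x hx
    have key : ∀ k, ∃ a : Fin n, (a : ℝ) / n ≤ x k ∧ x k < ((a : ℝ) + 1) / n := by
      intro k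
      have h0 : (0:ℝ) ≤ x k := (hx k (mem_univ k)).1
      have h1 : x k < 1 := (hx k (mem_univ k)).2
      have hnx : (0:ℝ) ≤ n * x k := by positivity
      refine ⟨⟨⌊(n:ℝ) * x k⌋₊, ?_⟩, ?_, ?_⟩
      · have : (n:ℝ) * x k < n := by nlinarith
        exact_mod_cast Nat.floor_lt hnx |>.mpr (by exact_mod_cast this)
      · rw [div_le_iff₀ hn']
        calc (⌊(n:ℝ) * x k⌋₊ : ℝ) ≤ n * x k := Nat.floor_le hnx
        _ = x k * n := by ring
      · rw [lt_div_iff₀ hn']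
        have := Nat.lt_floor_add_one ((n:ℝ) * x k)
        calc x k * n = n * x k := by ring
        _ < ⌊(n:ℝ) * x k⌋₊ + 1 := this
    choose w hw using key
    exact mem_iUnion.2 ⟨w, mem_cell_iff.2 hw⟩

lemma unitCube_ae_eq {d : ℕ} :
    (unitCube d : Set (Fin d → ℝ)) =ᵐ[volume] univ.pi fun _ : Fin d => Ico (0:ℝ) 1 := by
  have h1 : (unitCube d) = univ.pi fun _ : Fin d => Icc (0:ℝ) 1 := by
    rw [unitCube, ← Set.pi_univ_Icc]; rfl
  rw [h1]
  exact (Measure.ae_eq_set_pi fun k _ => (Ico_ae_eq_Icc (μ := volume) (a := (0:ℝ)) (b := 1))).symm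

lemma proj_eq_on_cell {d n : ℕ} (f : (Fin d → ℝ) → ℝ) {w : Fin d → Fin n} {x : Fin d → ℝ}
    (hx : x ∈ cubeCell d n w) :
    cubeProj d n f x = ⨍ y in cubeCell d n w, f y := by
  rw [cubeProj]
  rw [Finset.sum_eq_single_of_mem w (Finset.mem_univ w)]
  · exact indicator_of_mem hx _
  · intro w' _ hw'
    exact indicator_of_notMem (fun hx' => hw' (cell_eq_of_mem hx' hx)) _

/-- The fine subcell of a coarse cell. -/
def childCell {d n : ℕ} (v : Fin d → Fin n) (s : Fin d → Fin 2) : Fin d → Fin (n * 2) :=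
  fun k => ⟨2 * (v k : ℕ) + (s k : ℕ), by
    have h1 := (v k).2; have h2 := (s k).2; omega⟩

lemma childCell_inj {d n : ℕ} {v : Fin d → Fin n} {s s' : Fin d → Fin 2}
    (h : childCell v s = childCell v s') : s = s' := by
  funext k
  have := congrFun h k
  simp only [childCell, Fin.mk.injEq] at this
  exact Fin.ext (by omega)

lemma child_subset {d n : ℕ} (v : Fin d → Fin n) (s : Fin d → Fin 2) :
    cubeCell d (n * 2) (childCell v s) ⊆ cubeCell d n v := by
  intro x hx
  rw [mem_cell_iff] at hx ⊢
  intro k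
  rcases Nat.eq_zero_or_pos n with h0 | h0
  · exact (h0 ▸ v k).elim0
  have hn' : (0:ℝ) < n := by exact_mod_cast h0
  have h1 := (hx k).1; have h2 := (hx k).2
  have hc : ((childCell v s k : ℕ) : ℝ) = 2 * (v k : ℕ) + (s k : ℕ) := by
    simp [childCell]
  have hcast : ((n * 2 : ℕ) : ℝ) = (n : ℝ) * 2 := by push_cast; ring
  rw [hc, hcast] at h1 h2
  have hs0 : (0:ℝ) ≤ ((s k : ℕ) : ℝ) := by positivity
  have hs1 : ((s k : ℕ) : ℝ) ≤ 1 := by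
    have := (s k).2; exact_mod_cast Nat.lt_succ_iff.mp this
  constructor
  · rw [div_le_iff₀ hn']
    rw [div_le_iff₀ (by positivity : (0:ℝ) < (n:ℝ)*2)] at h1
    nlinarith
  · rw [lt_div_iff₀ hn']
    rw [lt_div_iff₀ (by positivity : (0:ℝ) < (n:ℝ)*2)] at h2
    nlinarith

lemma coarse_eq_iUnion_children {d n : ℕ} (hn : 0 < n) (v : Fin d → Fin n) :
    cubeCell d n v = ⋃ s : Fin d → Fin 2, cubeCell d (n * 2) (childCell v s) := by
  have hn' : (0:ℝ) < n := by exact_mod_cast hn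
  have hn2 : (0:ℝ) < (n:ℝ) * 2 := by positivity
  apply Set.Subset.antisymm
  · intro x hx
    rw [mem_cell_iff] at hx
    have key : ∀ k, ∃ s : Fin 2,
        ((childCell v (fun _ => s) k : ℕ) : ℝ) / (n*2 : ℕ) ≤ x k ∧
          x k < (((childCell v (fun _ => s) k : ℕ) : ℝ) + 1) / (n*2 : ℕ) := by
      intro k
      have h1 := (hx k).1; have h2 := (hx k).2
      rw [div_le_iff₀ hn'] at h1
      rw [lt_div_iff₀ hn'] at h2
      have hcast : ((n * 2 : ℕ) : ℝ) = (n : ℝ) * 2 := by push_cast; ring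
      by_cases hc : x k < (2 * (v k : ℕ) + 1) / ((n:ℝ) * 2)
      · refine ⟨0, ?_, ?_⟩
        · simp only [childCell, hcast, Fin.val_one, Fin.val_zero]
          push_cast
          rw [div_le_iff₀ hn2]; nlinarith
        · simp only [childCell, hcast, Fin.val_one, Fin.val_zero]
          push_cast
          rw [lt_div_iff₀ hn2]
          rw [lt_div_iff₀ hn2] at hc
          nlinarith
      · push_neg at hc
        refine ⟨1, ?_, ?_⟩
        · simp only [childCell, hcast, Fin.val_one, Fin.val_zero]
          push_cast
          rw [div_le_iff₀ hn2]
          rw [div_le_iff₀ hn2] at hc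
          nlinarith
        · simp only [childCell, hcast, Fin.val_one, Fin.val_zero]
          push_cast
          rw [lt_div_iff₀ hn2]; nlinarith
    choose s hs using key
    refine mem_iUnion.2 ⟨s, mem_cell_iff.2 fun k => ?_⟩
    have := hs k
    simpa [childCell] using this
  · exact Set.iUnion_subset fun s => child_subset v s

/-- Translation vector from cell `u` to cell `u'`. -/
noncomputable def cellShift {d n : ℕ} (u u' : Fin d → Fin n) : Fin d → ℝ :=
  fun k => ((u' k : ℝ) - (u k : ℝ)) / n

lemma preimage_shift_cell {d n : ℕ} (hn : 0 < n) (u u' : Fin d → Fin n) :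
    (· + cellShift u u') ⁻¹' cubeCell d n u' = cubeCell d n u := by
  have hn' : (0:ℝ) < n := by exact_mod_cast hn
  ext x
  simp only [mem_preimage, mem_cell_iff, Pi.add_apply, cellShift]
  constructor <;> intro hx <;> intro k <;> obtain ⟨h1, h2⟩ := hx k <;>
  · have e1 : ((u' k : ℝ)) / n - ((u' k : ℝ) - (u k : ℝ)) / n = (u k : ℝ) / n := by
      field_simp; ring
    have e2 : ((u' k : ℝ) + 1) / n - ((u' k : ℝ) - (u k : ℝ)) / n = ((u k : ℝ) + 1) / n := by
      field_simp; ring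
    constructor <;> linarith

lemma setIntegral_shift {d n : ℕ} (hn : 0 < n) (u u' : Fin d → Fin n)
    (g : (Fin d → ℝ) → ℝ) :
    ∫ y in cubeCell d n u, g (y + cellShift u u') ∂volume
      = ∫ z in cubeCell d n u', g z ∂volume := by
  have hmp : MeasurePreserving (· + cellShift u u') (volume : Measure (Fin d → ℝ)) volume :=
    measurePreserving_add_right volume _
  have hemb : MeasurableEmbedding (· + cellShift u u') :=
    (MeasurableEquiv.addRight (cellShift u u')).measurableEmbedding
  rw [← preimage_shift_cell hn u u']
  exact hmp.setIntegral_preimage_emb hemb g _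

section analytic
variable {d : ℕ} {p : ℝ} {f : (Fin d → ℝ) → ℝ}

lemma abs_sub_rpow_le (hp : 1 ≤ p) (a b : ℝ) :
    |a - b| ^ p ≤ 2 ^ p * (|a| ^ p + |b| ^ p) := by
  have hp0 : 0 ≤ p := le_trans zero_le_one hp
  set M := max |a| |b| with hM
  have hM0 : 0 ≤ M := le_trans (abs_nonneg a) (le_max_left _ _)
  have h1 : |a - b| ≤ 2 * M := by
    calc |a - b| ≤ |a| + |b| := abs_sub _ _
    _ ≤ M + M := add_le_add (le_max_left _ _) (le_max_right _ _)
    _ = 2 * M := by ring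
  calc |a - b| ^ p ≤ (2 * M) ^ p := Real.rpow_le_rpow (abs_nonneg _) h1 hp0
  _ = 2 ^ p * M ^ p := Real.mul_rpow (by norm_num) hM0
  _ ≤ 2 ^ p * (|a| ^ p + |b| ^ p) := by
      gcongr
      rcases max_cases |a| |b| with ⟨h, _⟩ | ⟨h, _⟩ <;> rw [← hM] at * <;> rw [h]
      · nlinarith [Real.rpow_nonneg (abs_nonneg b) p]
      · nlinarith [Real.rpow_nonneg (abs_nonneg a) p]

lemma memLp_restrict_of_subset (hp : 1 ≤ p)
    (hfLp : MemLp f (ENNReal.ofReal p) (volume.restrict (unitCube d)))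
    {S : Set (Fin d → ℝ)} (hS : MeasurableSet S) (hSQ : S ⊆ unitCube d) :
    MemLp f (ENNReal.ofReal p) (volume.restrict S) := by
  have : volume.restrict S = (volume.restrict (unitCube d)).restrict S := by
    rw [Measure.restrict_restrict hS, Set.inter_eq_left.2 hSQ]
  rw [this]
  exact hfLp.restrict S

lemma memLp_shift (hp : 1 ≤ p)
    (hfLp : MemLp f (ENNReal.ofReal p) (volume.restrict (unitCube d)))
    {S : Set (Fin d → ℝ)} (hS : MeasurableSet S) (h : Fin d → ℝ)
    (hSQ : (· + h) '' S ⊆ unitCube d) :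
    MemLp (fun x => f (x + h)) (ENNReal.ofReal p) (volume.restrict S) := by
  have hemb : MeasurableEmbedding (· + h : (Fin d → ℝ) → (Fin d → ℝ)) :=
    (MeasurableEquiv.addRight h).measurableEmbedding
  have hmap : Measure.map (· + h) (volume.restrict S)
      = volume.restrict ((· + h) '' S) := by
    have := Measure.restrict_map hemb.measurable (μ := (volume : Measure (Fin d → ℝ)))
      (hemb.measurableSet_image.2 hS)
    rw [Set.preimage_image_eq _ hemb.injective,
      (measurePreserving_add_right volume h).map_eq] at this
    exact this.symm
  have h1 : MemLp f (ENNReal.ofReal p) (volume.restrict ((· + h) '' S)) := by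
    refine MemLp.mono_measure ?_ (hfLp.restrict ((· + h) '' S))
    rw [Measure.restrict_restrict (hemb.measurableSet_image.2 hS),
      Set.inter_eq_left.2 hSQ]
  rw [← hmap] at h1
  exact (hemb.memLp_map_measure_iff).1 h1

lemma integrable_abs_rpow (hp : 1 ≤ p)
    {μ : Measure (Fin d → ℝ)} {g : (Fin d → ℝ) → ℝ}
    (hg : MemLp g (ENNReal.ofReal p) μ) :
    Integrable (fun x => |g x| ^ p) μ := by
  have h0 : (ENNReal.ofReal p) ≠ 0 := by
    simp [ENNReal.ofReal_eq_zero]; linarith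
  have := hg.integrable_norm_rpow h0 (by simp)
  simpa [Real.norm_eq_abs, ENNReal.toReal_ofReal (by linarith : (0:ℝ) ≤ p)] using this

end analytic

section analytic2
variable {d n : ℕ} {p : ℝ} {f : (Fin d → ℝ) → ℝ}

lemma avg_rpow_le (hp : 1 ≤ p) {S : Set (Fin d → ℝ)} (hS : MeasurableSet S)
    (h0 : volume S ≠ 0) (hfin : volume S ≠ ⊤) {g : (Fin d → ℝ) → ℝ}
    (hg : MemLp g (ENNReal.ofReal p) (volume.restrict S)) :
    |⨍ x in S, g x| ^ p ≤ ⨍ x in S, |g x| ^ p := by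
  have hp0 : (0:ℝ) ≤ p := by linarith
  haveI : IsFiniteMeasure (volume.restrict S) :=
    ⟨by simpa [Measure.restrict_apply_univ] using lt_top_iff_ne_top.2 hfin⟩
  haveI : NeZero (volume.restrict S) := by
    refine ⟨fun hc => h0 ?_⟩
    have := congrArg (fun μ : Measure (Fin d → ℝ) => μ univ) hc
    simpa [Measure.restrict_apply_univ] using this
  have hgi : Integrable g (volume.restrict S) :=
    hg.integrable (by exact_mod_cast ENNReal.one_le_ofReal.2 hp)
  have hgi2 : Integrable (fun x => |g x| ^ p) (volume.restrict S) :=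
    integrable_abs_rpow hp hg
  have step1 : |⨍ x in S, g x| ≤ ⨍ x in S, |g x| := by
    rw [setAverage_eq, setAverage_eq]
    simp only [smul_eq_mul, abs_mul, abs_inv]
    rw [abs_of_nonneg measureReal_nonneg]
    gcongr
    calc |∫ x in S, g x| = ‖∫ x in S, g x‖ := (Real.norm_eq_abs _).symm
      _ ≤ ∫ x in S, ‖g x‖ := norm_integral_le_integral_norm g
      _ = ∫ x in S, |g x| := by simp [Real.norm_eq_abs]
  have step2 : (⨍ x in S, |g x|) ^ p ≤ ⨍ x in S, |g x| ^ p := by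
    have hcvx : ConvexOn ℝ (Ici 0) fun x : ℝ => x ^ p := convexOn_rpow hp
    have hcont : ContinuousOn (fun x : ℝ => x ^ p) (Ici 0) := fun x hx =>
      (Real.continuousAt_rpow_const x p (Or.inr hp0)).continuousWithinAt
    have := hcvx.map_average_le hcont isClosed_Ici
      (Filter.Eventually.of_forall fun x => abs_nonneg (g x)) hgi.abs ?_
    · exact this
    · exact hgi2.congr (Filter.Eventually.of_forall fun x => rfl)
  calc |⨍ x in S, g x| ^ p ≤ (⨍ x in S, |g x|) ^ p :=
        Real.rpow_le_rpow (abs_nonneg _) step1 hp0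
  _ ≤ _ := step2

lemma volume_cell_ne_zero (hn : 0 < n) (w : Fin d → Fin n) :
    volume (cubeCell d n w) ≠ 0 := by
  rw [volume_cell hn]
  have : (0:ℝ) < (n:ℝ)⁻¹ := by
    have : (0:ℝ) < n := by exact_mod_cast hn
    positivity
  simp only [pow_eq_zero_iff', ENNReal.ofReal_eq_zero, not_and, not_le, ne_eq]
  intro hle
  exact absurd hle (not_le.2 this)

lemma volume_cell_ne_top (hn : 0 < n) (w : Fin d → Fin n) :
    volume (cubeCell d n w) ≠ ⊤ := by
  rw [volume_cell hn]
  exact ENNReal.pow_ne_top ENNReal.ofReal_ne_top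

lemma image_shift_cell (hn : 0 < n) (u u' : Fin d → Fin n) :
    (· + cellShift u u') '' cubeCell d n u = cubeCell d n u' := by
  rw [← preimage_shift_cell hn u u']
  exact Set.image_preimage_eq _ (MeasurableEquiv.addRight (cellShift u u')).surjective

lemma avg_diff_rpow_le (hn : 0 < n) (hp : 1 ≤ p)
    (hfLp : MemLp f (ENNReal.ofReal p) (volume.restrict (unitCube d)))
    (u u' : Fin d → Fin n) :
    |(⨍ y in cubeCell d n u, f y) - ⨍ y in cubeCell d n u', f y| ^ p
      ≤ ⨍ y in cubeCell d n u, |f y - f (y + cellShift u u')| ^ p := by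
  set S := cubeCell d n u with hSdef
  set h := cellShift u u' with hhdef
  have hS : MeasurableSet S := cell_measurable u
  have h0 := volume_cell_ne_zero hn u
  have htop := volume_cell_ne_top hn u
  have himg : (· + h) '' S ⊆ unitCube d := by
    rw [image_shift_cell hn u u']
    exact cell_subset_unitCube hn u'
  have hf1 : MemLp f (ENNReal.ofReal p) (volume.restrict S) :=
    memLp_restrict_of_subset hp hfLp hS (cell_subset_unitCube hn u)
  have hf2 : MemLp (fun x => f (x + h)) (ENNReal.ofReal p) (volume.restrict S) :=
    memLp_shift hp hfLp hS h himg
  have hg : MemLp (fun y => f y - f (y + h)) (ENNReal.ofReal p) (volume.restrict S) :=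
    hf1.sub hf2
  have key := avg_rpow_le hp hS h0 htop hg
  have havg : ⨍ y in S, (f y - f (y + h)) = (⨍ y in S, f y) - ⨍ y in cubeCell d n u', f y := by
    have h1le : (1:ENNReal) ≤ ENNReal.ofReal p := by exact_mod_cast ENNReal.one_le_ofReal.2 hp
    haveI : IsFiniteMeasure (volume.restrict S) :=
      ⟨by simpa [Measure.restrict_apply_univ] using lt_top_iff_ne_top.2 htop⟩
    rw [setAverage_eq, setAverage_eq, setAverage_eq,
      integral_sub (hf1.integrable h1le) (hf2.integrable h1le), smul_sub]
    congr 1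
    rw [setIntegral_shift hn u u' f, measureReal_def, measureReal_def, volume_cell hn, volume_cell hn]
  rw [havg] at key
  exact key

end analytic2

section modulus
variable {d : ℕ} {p α : ℝ} {f : (Fin d → ℝ) → ℝ}

lemma integrableOn_comp_add {T : Set (Fin d → ℝ)} (hT : MeasurableSet T)
    (G : (Fin d → ℝ) → ℝ) (h : Fin d → ℝ) (hG : IntegrableOn G T volume) :
    IntegrableOn (fun x => G (x + h)) ((· + h) ⁻¹' T) volume := by
  have hemb : MeasurableEmbedding (· + h : (Fin d → ℝ) → _) :=
    (MeasurableEquiv.addRight h).measurableEmbedding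
  have hmap : Measure.map (· + h) (volume.restrict ((· + h) ⁻¹' T)) = volume.restrict T := by
    have := Measure.restrict_map hemb.measurable (μ := (volume : Measure (Fin d → ℝ))) hT
    rw [(measurePreserving_add_right volume h).map_eq] at this
    exact this.symm
  rw [IntegrableOn, ← hmap] at hG
  exact (hemb.integrable_map_iff).1 hG

lemma setIntegral_translate (S : Set (Fin d → ℝ)) (g : (Fin d → ℝ) → ℝ) (h : Fin d → ℝ) :
    ∫ y in (· + h) ⁻¹' S, g (y + h) ∂volume = ∫ z in S, g z ∂volume := by
  have hmp : MeasurePreserving (· + h) (volume : Measure (Fin d → ℝ)) volume :=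
    measurePreserving_add_right volume _
  exact hmp.setIntegral_preimage_emb ((MeasurableEquiv.addRight h).measurableEmbedding) g S

lemma unitCube_measurable : MeasurableSet (unitCube d) := measurableSet_Icc

lemma Qh_eq (h : Fin d → ℝ) :
    {x ∈ unitCube d | x + h ∈ unitCube d} = unitCube d ∩ (· + h) ⁻¹' (unitCube d) := rfl

lemma Qh_measurable (h : Fin d → ℝ) :
    MeasurableSet {x ∈ unitCube d | x + h ∈ unitCube d} := by
  rw [Qh_eq]
  exact unitCube_measurable.inter
    ((MeasurableEquiv.addRight h).measurable unitCube_measurable)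

lemma term_nonneg (h : Fin d → ℝ) :
    0 ≤ (∫ x in {x ∈ unitCube d | x + h ∈ unitCube d}, |f x - f (x + h)| ^ p ∂volume) ^ (1 / p) :=
  Real.rpow_nonneg (setIntegral_nonneg (Qh_measurable h)
    fun x _ => Real.rpow_nonneg (abs_nonneg _) p) _

lemma term_integrable (hp : 1 ≤ p)
    (hfLp : MemLp f (ENNReal.ofReal p) (volume.restrict (unitCube d)))
    {S : Set (Fin d → ℝ)} (hS : MeasurableSet S) (hSQ : S ⊆ unitCube d)
    (h : Fin d → ℝ) (hSh : (· + h) '' S ⊆ unitCube d) :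
    IntegrableOn (fun x => |f x - f (x + h)| ^ p) S volume := by
  have h1 := memLp_restrict_of_subset hp hfLp hS hSQ
  have h2 := memLp_shift hp hfLp hS h hSh
  exact integrable_abs_rpow hp (h1.sub h2)

lemma term_le_bound (hp : 1 ≤ p)
    (hfLp : MemLp f (ENNReal.ofReal p) (volume.restrict (unitCube d))) (h : Fin d → ℝ) :
    (∫ x in {x ∈ unitCube d | x + h ∈ unitCube d}, |f x - f (x + h)| ^ p ∂volume) ^ (1 / p)
      ≤ (2 ^ p * (2 * ∫ x in unitCube d, |f x| ^ p ∂volume)) ^ (1 / p) := by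
  set Qh := {x ∈ unitCube d | x + h ∈ unitCube d} with hQh
  have hS : MeasurableSet Qh := Qh_measurable h
  have hSQ : Qh ⊆ unitCube d := fun x hx => hx.1
  have hSh : (· + h) '' Qh ⊆ unitCube d := by
    rintro _ ⟨x, hx, rfl⟩; exact hx.2
  have hI : IntegrableOn (fun x => |f x| ^ p) (unitCube d) volume :=
    integrable_abs_rpow hp hfLp
  have hI1 : IntegrableOn (fun x => |f x| ^ p) Qh volume := hI.mono_set hSQ
  have hI2 : IntegrableOn (fun x => |f (x + h)| ^ p) Qh volume :=
    integrable_abs_rpow hp (memLp_shift hp hfLp hS h hSh)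
  have hIdiff : IntegrableOn (fun x => |f x - f (x + h)| ^ p) Qh volume :=
    term_integrable hp hfLp hS hSQ h hSh
  have hnonneg : ∀ x, (0:ℝ) ≤ |f x| ^ p := fun x => Real.rpow_nonneg (abs_nonneg _) _
  have key : (∫ x in Qh, |f x - f (x + h)| ^ p ∂volume)
      ≤ 2 ^ p * (2 * ∫ x in unitCube d, |f x| ^ p ∂volume) := by
    have step1 : (∫ x in Qh, |f x - f (x + h)| ^ p ∂volume)
        ≤ ∫ x in Qh, 2 ^ p * (|f x| ^ p + |f (x + h)| ^ p) ∂volume := by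
      refine setIntegral_mono hIdiff ?_ fun x => abs_sub_rpow_le hp _ _
      exact ((hI1.add hI2).const_mul _)
    have step2 : (∫ x in Qh, 2 ^ p * (|f x| ^ p + |f (x + h)| ^ p) ∂volume)
        = 2 ^ p * ((∫ x in Qh, |f x| ^ p ∂volume) + ∫ x in Qh, |f (x + h)| ^ p ∂volume) := by
      rw [integral_const_mul, integral_add hI1 hI2]
    have b1 : (∫ x in Qh, |f x| ^ p ∂volume) ≤ ∫ x in unitCube d, |f x| ^ p ∂volume := by
      apply setIntegral_mono_set hI
        (Filter.Eventually.of_forall fun x => hnonneg x) (HasSubset.Subset.eventuallyLE hSQ)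
    have b2 : (∫ x in Qh, |f (x + h)| ^ p ∂volume) ≤ ∫ x in unitCube d, |f x| ^ p ∂volume := by
      have him : (· + h) '' Qh ⊆ unitCube d := hSh
      have hpre : Qh ⊆ (· + h) ⁻¹' ((· + h) '' Qh) := Set.subset_preimage_image _ _
      have heq : (∫ x in (· + h) ⁻¹' ((· + h) '' Qh), |f (x + h)| ^ p ∂volume)
          = ∫ z in (· + h) '' Qh, |f z| ^ p ∂volume :=
        setIntegral_translate _ (fun z => |f z| ^ p) h
      have himeas : MeasurableSet ((· + h) '' Qh) :=
        (MeasurableEquiv.addRight h).measurableEmbedding.measurableSet_image.2 hS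
      have hIim : IntegrableOn (fun x => |f (x + h)| ^ p) ((· + h) ⁻¹' ((· + h) '' Qh)) volume :=
        integrableOn_comp_add himeas (fun z => |f z| ^ p) h (hI.mono_set him)
      calc (∫ x in Qh, |f (x + h)| ^ p ∂volume)
          ≤ ∫ x in (· + h) ⁻¹' ((· + h) '' Qh), |f (x + h)| ^ p ∂volume := by
            apply setIntegral_mono_set hIim
              (Filter.Eventually.of_forall fun x => hnonneg _)
              (HasSubset.Subset.eventuallyLE hpre)
      _ = ∫ z in (· + h) '' Qh, |f z| ^ p ∂volume := heq
      _ ≤ ∫ x in unitCube d, |f x| ^ p ∂volume := by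
            apply setIntegral_mono_set hI
              (Filter.Eventually.of_forall fun x => hnonneg x)
              (HasSubset.Subset.eventuallyLE him)
    calc (∫ x in Qh, |f x - f (x + h)| ^ p ∂volume)
        ≤ _ := step1
    _ = _ := step2
    _ ≤ 2 ^ p * (2 * ∫ x in unitCube d, |f x| ^ p ∂volume) := by
        have h2p : (0:ℝ) ≤ 2 ^ p := Real.rpow_nonneg (by norm_num) _
        nlinarith [b1, b2]
  refine Real.rpow_le_rpow ?_ key (by positivity)
  exact setIntegral_nonneg hS fun x _ => Real.rpow_nonneg (abs_nonneg _) _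

end modulus

section modulus2
variable {d : ℕ} {p α : ℝ} {f : (Fin d → ℝ) → ℝ}

lemma term_le_modulus (hp : 1 ≤ p)
    (hfLp : MemLp f (ENNReal.ofReal p) (volume.restrict (unitCube d)))
    {δ : ℝ} {h : Fin d → ℝ} (hh : ‖h‖ ≤ δ) :
    (∫ x in {x ∈ unitCube d | x + h ∈ unitCube d}, |f x - f (x + h)| ^ p ∂volume) ^ (1 / p)
      ≤ modulusLp d p f δ := by
  have hbdd : BddAbove (Set.range fun h : {h : Fin d → ℝ // ‖h‖ ≤ δ} =>
      (∫ x in {x ∈ unitCube d | x + h.1 ∈ unitCube d},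
        |f x - f (x + h.1)| ^ p ∂volume) ^ (1 / p)) := by
    refine ⟨(2 ^ p * (2 * ∫ x in unitCube d, |f x| ^ p ∂volume)) ^ (1 / p), ?_⟩
    rintro _ ⟨h', rfl⟩
    exact term_le_bound hp hfLp h'.1
  exact le_ciSup hbdd (⟨h, hh⟩ : {h : Fin d → ℝ // ‖h‖ ≤ δ})

lemma modulus_nonneg (δ : ℝ) (hδ : 0 ≤ δ) : 0 ≤ modulusLp d p f δ := by
  have : 0 ≤ (∫ x in {x ∈ unitCube d | x + (0 : Fin d → ℝ) ∈ unitCube d},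
      |f x - f (x + (0 : Fin d → ℝ))| ^ p ∂volume) ^ (1 / p) := term_nonneg 0
  refine Real.iSup_nonneg fun h => term_nonneg h.1

lemma lipLpNorm_nonneg : 0 ≤ lipLpNorm d p α f :=
  Real.iSup_nonneg fun δ => mul_nonneg (Real.rpow_nonneg δ.2.le _) (modulus_nonneg δ.1 δ.2.le)

lemma modulus_le_lipLpNorm (hf : MemLipLp d p α f) {δ : ℝ} (hδ : 0 < δ) :
    modulusLp d p f δ ≤ δ ^ α * lipLpNorm d p α f := by
  obtain ⟨C, hC⟩ := hf
  have hbdd : BddAbove (Set.range fun δ' : {δ : ℝ // 0 < δ} =>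
      (δ'.1) ^ (-α) * modulusLp d p f δ'.1) := by
    refine ⟨C, ?_⟩
    rintro _ ⟨δ', rfl⟩
    have h1 : modulusLp d p f δ'.1 ≤ C * δ'.1 ^ α := hC δ'.1 δ'.2
    have h2 : (0:ℝ) ≤ δ'.1 ^ (-α) := Real.rpow_nonneg δ'.2.le _
    calc δ'.1 ^ (-α) * modulusLp d p f δ'.1 ≤ δ'.1 ^ (-α) * (C * δ'.1 ^ α) := by
          exact mul_le_mul_of_nonneg_left h1 h2
    _ = C * (δ'.1 ^ (-α) * δ'.1 ^ α) := by ring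
    _ = C := by
        rw [← Real.rpow_add δ'.2]
        simp
  have key : δ ^ (-α) * modulusLp d p f δ ≤ lipLpNorm d p α f :=
    le_ciSup hbdd (⟨δ, hδ⟩ : {δ : ℝ // 0 < δ})
  have hpos : (0:ℝ) < δ ^ α := Real.rpow_pos_of_pos hδ _
  have e : δ ^ α * (δ ^ (-α) * modulusLp d p f δ) = modulusLp d p f δ := by
    rw [← mul_assoc, ← Real.rpow_add hδ]
    simp
  calc modulusLp d p f δ = δ ^ α * (δ ^ (-α) * modulusLp d p f δ) := e.symm
  _ ≤ δ ^ α * lipLpNorm d p α f := mul_le_mul_of_nonneg_left key hpos.le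

end modulus2

section glue
variable {d n : ℕ} {p α : ℝ} {f : (Fin d → ℝ) → ℝ}

lemma childCell_inj_v {v v' : Fin d → Fin n} {s : Fin d → Fin 2}
    (h : childCell v s = childCell v' s) : v = v' := by
  funext k
  have := congrFun h k
  simp only [childCell, Fin.mk.injEq] at this
  exact Fin.ext (by omega)

/-- Shift between sibling subcells. -/
noncomputable def sibShift (n : ℕ) (s t : Fin d → Fin 2) : Fin d → ℝ :=
  fun k => ((t k : ℝ) - (s k : ℝ)) / ((n * 2 : ℕ) : ℝ)

lemma cellShift_childCell (v : Fin d → Fin n) (s t : Fin d → Fin 2) :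
    cellShift (childCell v s) (childCell v t) = sibShift n s t := by
  funext k
  simp only [cellShift, childCell, sibShift]
  push_cast
  ring_nf

lemma sibShift_norm_le (hn : 0 < n) (s t : Fin d → Fin 2) :
    ‖sibShift n s t‖ ≤ ((n * 2 : ℕ) : ℝ)⁻¹ := by
  have hN : (0:ℝ) < ((n * 2 : ℕ) : ℝ) := by
    have : 0 < n * 2 := by omega
    exact_mod_cast this
  rw [pi_norm_le_iff_of_nonneg (by positivity)]
  intro k
  rw [Real.norm_eq_abs, sibShift, abs_div, abs_of_nonneg hN.le,
    div_le_iff₀ hN, inv_mul_cancel₀ hN.ne']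
  have h1 : ((t k : ℕ) : ℝ) ≤ 1 := by
    have := (t k).2; exact_mod_cast Nat.lt_succ_iff.mp this
  have h2 : ((s k : ℕ) : ℝ) ≤ 1 := by
    have := (s k).2; exact_mod_cast Nat.lt_succ_iff.mp this
  have h3 : (0:ℝ) ≤ ((t k : ℕ) : ℝ) := by positivity
  have h4 : (0:ℝ) ≤ ((s k : ℕ) : ℝ) := by positivity
  rw [abs_le]
  constructor <;> linarith

lemma sum_setIntegral {ι : Type*} [Fintype ι] (S : ι → Set (Fin d → ℝ))
    (hm : ∀ i, MeasurableSet (S i)) (hd : Pairwise (Function.onFun Disjoint S))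
    (G : (Fin d → ℝ) → ℝ) (hG : IntegrableOn G (⋃ i, S i) volume) :
    ∫ x in ⋃ i, S i, G x ∂volume = ∑ i, ∫ x in S i, G x ∂volume := by
  rw [integral_iUnion hm hd hG, tsum_fintype]

end glue

lemma integrableOn_of_memLp {d : ℕ} {p : ℝ} {f : (Fin d → ℝ) → ℝ} (hp : 1 ≤ p)
    (hfLp : MemLp f (ENNReal.ofReal p) (volume.restrict (unitCube d)))
    {S : Set (Fin d → ℝ)} (hS : MeasurableSet S) (hSQ : S ⊆ unitCube d)
    (hfin : volume S ≠ ⊤) : IntegrableOn f S volume := by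
  haveI : IsFiniteMeasure (volume.restrict S) :=
    ⟨by simpa [Measure.restrict_apply_univ] using lt_top_iff_ne_top.2 hfin⟩
  exact (memLp_restrict_of_subset hp hfLp hS hSQ).integrable
    (by exact_mod_cast ENNReal.one_le_ofReal.2 hp)

/-- for `f ∈ Lip(Lᵖ(Q), α)` and dyadic projections `f^m` of mesh `2^{−m}`,
`‖f^{m+1} − f^m‖_{Lᵖ(Q)} ≤ (2^d − 1)^{1/p} d^{α/2} 2^{−α(m+1)} ‖f‖_{Lip(Lᵖ(Q),α)}`. -/
theorem stmt2 (d : ℕ) (hd : 0 < d) (p α : ℝ) (hp : 1 ≤ p) (hα : α ∈ Set.Ioc (0:ℝ) 1)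
    (f : (Fin d → ℝ) → ℝ) (hfLp : MemLp f (ENNReal.ofReal p) (volume.restrict (unitCube d)))
    (hf : MemLipLp d p α f) (m : ℕ) :
    (∫ x in unitCube d, |cubeProj d (2 ^ (m + 1)) f x - cubeProj d (2 ^ m) f x| ^ p ∂volume) ^ (1 / p)
      ≤ ((2:ℝ) ^ d - 1) ^ (1 / p) * (d : ℝ) ^ (α / 2) * (2:ℝ) ^ (-(α * (m + 1)))
          * lipLpNorm d p α f := by
  obtain ⟨hα0, hα1⟩ := hα
  have hp0 : (0:ℝ) < p := lt_of_lt_of_le zero_lt_one hp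
  have hpow : (2:ℕ) ^ (m + 1) = 2 ^ m * 2 := pow_succ 2 m
  rw [hpow]
  set n : ℕ := 2 ^ m with hndef
  have hn : 0 < n := Nat.pow_pos (by norm_num)
  have hN : 0 < n * 2 := by omega
  have hNR : (0:ℝ) < ((n * 2 : ℕ) : ℝ) := by exact_mod_cast hN
  set L := lipLpNorm d p α f with hLdef
  have hL0 : 0 ≤ L := lipLpNorm_nonneg
  set δ : ℝ := Real.sqrt d * ((n * 2 : ℕ) : ℝ)⁻¹ with hδdef
  have hd1 : (1:ℝ) ≤ Real.sqrt d := by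
    rw [Real.one_le_sqrt]; exact_mod_cast hd
  have hδpos : 0 < δ := mul_pos (lt_of_lt_of_le one_pos hd1) (inv_pos.2 hNR)
  set W := δ ^ α * L with hWdef
  have hW0 : 0 ≤ W := mul_nonneg (Real.rpow_nonneg hδpos.le _) hL0
  set g := fun x => cubeProj d (n * 2) f x - cubeProj d n f x with hgdef
  set A := fun (v : Fin d → Fin n) (s : Fin d → Fin 2) =>
    ⨍ y in cubeCell d (n * 2) (childCell v s), f y with hAdef
  set c := fun (v : Fin d → Fin n) (s : Fin d → Fin 2) =>
    A v s - ⨍ y in cubeCell d n v, f y with hcdef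
  have hgval : ∀ (v : Fin d → Fin n) (s : Fin d → Fin 2),
      ∀ x ∈ cubeCell d (n * 2) (childCell v s), g x = c v s := by
    intro v s x hx
    simp only [hgdef, hcdef, hAdef]
    rw [proj_eq_on_cell f hx, proj_eq_on_cell f (child_subset v s hx)]
  set κ := ((n * 2 : ℕ) : ℝ)⁻¹ ^ d with hκdef
  have hκpos : 0 < κ := by positivity
  have hvolC : ∀ w : Fin d → Fin (n * 2), (volume (cubeCell d (n * 2) w)).toReal = κ := by
    intro w
    rw [volume_cell hN, ENNReal.toReal_pow, ENNReal.toReal_ofReal (by positivity)]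
  have hvolD : ∀ v : Fin d → Fin n, (volume (cubeCell d n v)).toReal = 2 ^ d * κ := by
    intro v
    rw [volume_cell hn, ENNReal.toReal_pow, ENNReal.toReal_ofReal (by positivity), hκdef]
    rw [← mul_pow]
    congr 1
    have hnR : (0:ℝ) < (n : ℝ) := by exact_mod_cast hn
    push_cast
    field_simp
  have hcellInt : ∀ (v : Fin d → Fin n) (s : Fin d → Fin 2),
      ∫ x in cubeCell d (n * 2) (childCell v s), |g x| ^ p ∂volume = κ * |c v s| ^ p := by
    intro v s
    rw [setIntegral_congr_fun (cell_measurable _)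
      (fun x hx => by
        show |g x| ^ p = |c v s| ^ p
        rw [hgval v s x hx] : EqOn (fun x => |g x| ^ p)
        (fun _ => |c v s| ^ p) (cubeCell d (n * 2) (childCell v s)))]
    rw [setIntegral_const, measureReal_def, hvolC, smul_eq_mul]
  have hcellIntOn : ∀ (v : Fin d → Fin n) (s : Fin d → Fin 2),
      IntegrableOn (fun x => |g x| ^ p) (cubeCell d (n * 2) (childCell v s)) volume := by
    intro v s
    rw [integrableOn_congr_fun
      (fun x hx => by
        show |g x| ^ p = |c v s| ^ p
        rw [hgval v s x hx] : EqOn (fun x => |g x| ^ p)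
        (fun _ => |c v s| ^ p) (cubeCell d (n * 2) (childCell v s))) (cell_measurable _)]
    exact integrableOn_const (volume_cell_ne_top hN _)
  have hDdecomp : ∀ v : Fin d → Fin n,
      cubeCell d n v = ⋃ s : Fin d → Fin 2, cubeCell d (n * 2) (childCell v s) :=
    coarse_eq_iUnion_children hn
  have hDIntOn : ∀ v : Fin d → Fin n,
      IntegrableOn (fun x => |g x| ^ p) (cubeCell d n v) volume := by
    intro v
    rw [hDdecomp v]
    exact integrableOn_finite_iUnion.2 (hcellIntOn v)
  have hsplitD : ∀ v : Fin d → Fin n, ∫ x in cubeCell d n v, |g x| ^ p ∂volume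
      = ∑ s : Fin d → Fin 2, ∫ x in cubeCell d (n * 2) (childCell v s), |g x| ^ p ∂volume := by
    intro v
    rw [hDdecomp v]
    exact sum_setIntegral _ (fun s => cell_measurable _)
      (fun s s' hss => cell_disjoint fun hc => hss (childCell_inj hc)) _
      (integrableOn_finite_iUnion.2 (hcellIntOn v))
  have hQsplit : ∫ x in unitCube d, |g x| ^ p ∂volume
      = ∑ v : Fin d → Fin n, ∑ s : Fin d → Fin 2,
          ∫ x in cubeCell d (n * 2) (childCell v s), |g x| ^ p ∂volume := by
    rw [setIntegral_congr_set unitCube_ae_eq, ← iUnion_cells hn,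
      sum_setIntegral _ (fun v => cell_measurable v)
        (fun v v' hvv => cell_disjoint hvv) _ (integrableOn_finite_iUnion.2 hDIntOn)]
    exact Finset.sum_congr rfl fun v _ => hsplitD v
  have hcardN : Fintype.card (Fin d → Fin 2) = 2 ^ d := by simp
  have hAvgD : ∀ v : Fin d → Fin n,
      (⨍ y in cubeCell d n v, f y) = ((2:ℝ) ^ d)⁻¹ * ∑ t : Fin d → Fin 2, A v t := by
    intro v
    have hIf : ∀ s : Fin d → Fin 2,
        IntegrableOn f (cubeCell d (n * 2) (childCell v s)) volume := fun s =>
      integrableOn_of_memLp hp hfLp (cell_measurable _) (cell_subset_unitCube hN _)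
        (volume_cell_ne_top hN _)
    have hsum : ∫ y in cubeCell d n v, f y ∂volume
        = ∑ t : Fin d → Fin 2, ∫ y in cubeCell d (n * 2) (childCell v t), f y ∂volume := by
      rw [hDdecomp v]
      exact sum_setIntegral _ (fun s => cell_measurable _)
        (fun s s' hss => cell_disjoint fun hc => hss (childCell_inj hc)) _
        (integrableOn_finite_iUnion.2 hIf)
    have hint_eq : ∀ t : Fin d → Fin 2,
        ∫ y in cubeCell d (n * 2) (childCell v t), f y ∂volume = κ * A v t := by
      intro t
      have : A v t = κ⁻¹ * ∫ y in cubeCell d (n * 2) (childCell v t), f y ∂volume := by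
        simp only [hAdef]
        rw [setAverage_eq, measureReal_def, hvolC, smul_eq_mul]
      rw [this, ← mul_assoc, mul_inv_cancel₀ hκpos.ne', one_mul]
    rw [setAverage_eq, hsum, measureReal_def, hvolD, smul_eq_mul, Finset.sum_congr rfl fun t _ => hint_eq t,
      ← Finset.mul_sum]
    rw [mul_inv, ← mul_assoc]
    congr 1
    rw [mul_assoc, inv_mul_cancel₀ hκpos.ne', mul_one]
  have hc_bound : ∀ (v : Fin d → Fin n) (s : Fin d → Fin 2), |c v s| ^ p
      ≤ ∑ t ∈ Finset.univ.erase s, ((2:ℝ) ^ d)⁻¹ * |A v s - A v t| ^ p := by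
    intro v s
    have h2d : (0:ℝ) < 2 ^ d := by positivity
    have e1 : c v s = ∑ t : Fin d → Fin 2, ((2:ℝ) ^ d)⁻¹ * (A v s - A v t) := by
      simp only [hcdef]
      rw [hAvgD v, ← Finset.mul_sum, Finset.sum_sub_distrib, Finset.sum_const,
        Finset.card_univ, hcardN]
      push_cast
      field_simp
      ring
    have e2 : |c v s| ≤ ∑ t : Fin d → Fin 2, ((2:ℝ) ^ d)⁻¹ * |A v s - A v t| := by
      rw [e1]
      refine le_trans (Finset.abs_sum_le_sum_abs _ _) (Finset.sum_le_sum fun t _ => ?_)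
      rw [abs_mul, abs_of_nonneg (by positivity : (0:ℝ) ≤ ((2:ℝ)^d)⁻¹)]
    have e3 : |c v s| ^ p ≤ ∑ t : Fin d → Fin 2, ((2:ℝ) ^ d)⁻¹ * |A v s - A v t| ^ p := by
      calc |c v s| ^ p ≤ (∑ t : Fin d → Fin 2, ((2:ℝ) ^ d)⁻¹ * |A v s - A v t|) ^ p :=
            Real.rpow_le_rpow (abs_nonneg _) e2 hp0.le
      _ ≤ _ := by
          refine Real.rpow_arith_mean_le_arith_mean_rpow Finset.univ _ _
            (fun _ _ => by positivity) ?_ (fun t _ => abs_nonneg _) hp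
          rw [Finset.sum_const, Finset.card_univ, hcardN, nsmul_eq_mul]
          push_cast
          field_simp
    rwa [← Finset.sum_erase (f := fun t => ((2:ℝ) ^ d)⁻¹ * |A v s - A v t| ^ p) (a := s)
      Finset.univ (by simp [sub_self, abs_zero, Real.zero_rpow hp0.ne'])] at e3
  have hJen : ∀ (v : Fin d → Fin n) (s t : Fin d → Fin 2), κ * |A v s - A v t| ^ p
      ≤ ∫ y in cubeCell d (n * 2) (childCell v s), |f y - f (y + sibShift n s t)| ^ p ∂volume := by
    intro v s t
    have h1 := avg_diff_rpow_le hN hp hfLp (childCell v s) (childCell v t)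
    rw [cellShift_childCell] at h1
    have h2 := mul_le_mul_of_nonneg_left h1 hκpos.le
    have h3 : κ * ⨍ y in cubeCell d (n * 2) (childCell v s),
        |f y - f (y + sibShift n s t)| ^ p ∂volume
        = ∫ y in cubeCell d (n * 2) (childCell v s),
            |f y - f (y + sibShift n s t)| ^ p ∂volume := by
      rw [setAverage_eq, measureReal_def, hvolC, smul_eq_mul, ← mul_assoc, mul_inv_cancel₀ hκpos.ne', one_mul]
    calc κ * |A v s - A v t| ^ p ≤ _ := h2
    _ = _ := h3
  have hST : ∀ s t : Fin d → Fin 2,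
      (∑ v : Fin d → Fin n,
        ∫ y in cubeCell d (n * 2) (childCell v s), |f y - f (y + sibShift n s t)| ^ p ∂volume)
      ≤ W ^ p := by
    intro s t
    set h : Fin d → ℝ := sibShift n s t with hhdef
    have hhnorm : ‖h‖ ≤ δ := by
      refine le_trans (sibShift_norm_le hn s t) ?_
      rw [hδdef]
      nlinarith [inv_pos.2 hNR]
    have hsubQ : ∀ v : Fin d → Fin n,
        cubeCell d (n * 2) (childCell v s) ⊆ {x ∈ unitCube d | x + h ∈ unitCube d} := by
      intro v x hx
      refine ⟨cell_subset_unitCube hN _ hx, ?_⟩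
      have : x ∈ (· + h) ⁻¹' cubeCell d (n * 2) (childCell v t) := by
        rw [hhdef, ← cellShift_childCell v s t, preimage_shift_cell hN]
        exact hx
      exact cell_subset_unitCube hN _ this
    have hQhm : MeasurableSet {x ∈ unitCube d | x + h ∈ unitCube d} := Qh_measurable h
    have hQhQ : {x ∈ unitCube d | x + h ∈ unitCube d} ⊆ unitCube d := fun x hx => hx.1
    have hQhimg : (· + h) '' {x ∈ unitCube d | x + h ∈ unitCube d} ⊆ unitCube d := by
      rintro _ ⟨x, hx, rfl⟩; exact hx.2
    have hIQh : IntegrableOn (fun x => |f x - f (x + h)| ^ p)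
        {x ∈ unitCube d | x + h ∈ unitCube d} volume :=
      term_integrable hp hfLp hQhm hQhQ h hQhimg
    have hUsub : (⋃ v : Fin d → Fin n, cubeCell d (n * 2) (childCell v s))
        ⊆ {x ∈ unitCube d | x + h ∈ unitCube d} := Set.iUnion_subset hsubQ
    have hsum : (∑ v : Fin d → Fin n,
        ∫ y in cubeCell d (n * 2) (childCell v s), |f y - f (y + h)| ^ p ∂volume)
        = ∫ y in ⋃ v : Fin d → Fin n, cubeCell d (n * 2) (childCell v s),
            |f y - f (y + h)| ^ p ∂volume :=
      (sum_setIntegral _ (fun v => cell_measurable _)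
        (fun v v' hvv => cell_disjoint fun hc => hvv (childCell_inj_v hc)) _
        (hIQh.mono_set hUsub)).symm
    have hmono : (∫ y in ⋃ v : Fin d → Fin n, cubeCell d (n * 2) (childCell v s),
          |f y - f (y + h)| ^ p ∂volume)
        ≤ ∫ x in {x ∈ unitCube d | x + h ∈ unitCube d}, |f x - f (x + h)| ^ p ∂volume :=
      setIntegral_mono_set hIQh
        (Filter.Eventually.of_forall fun x => Real.rpow_nonneg (abs_nonneg _) _)
        (HasSubset.Subset.eventuallyLE hUsub)
    have hterm : (∫ x in {x ∈ unitCube d | x + h ∈ unitCube d},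
          |f x - f (x + h)| ^ p ∂volume) ≤ W ^ p := by
      set I := ∫ x in {x ∈ unitCube d | x + h ∈ unitCube d}, |f x - f (x + h)| ^ p ∂volume with hI
      have hI0 : 0 ≤ I := setIntegral_nonneg hQhm fun x _ => Real.rpow_nonneg (abs_nonneg _) _
      have hT : I ^ (1/p) ≤ W := by
        refine le_trans (term_le_modulus hp hfLp hhnorm) ?_
        rw [hWdef]
        exact modulus_le_lipLpNorm hf hδpos
      have : (I ^ (1/p)) ^ p ≤ W ^ p :=
        Real.rpow_le_rpow (Real.rpow_nonneg hI0 _) hT hp0.le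
      rwa [← Real.rpow_mul hI0, one_div, inv_mul_cancel₀ hp0.ne', Real.rpow_one] at this
    calc _ = _ := hsum
    _ ≤ _ := hmono
    _ ≤ W ^ p := hterm
  -- put everything together
  have h2dinv : (0:ℝ) ≤ ((2:ℝ) ^ d)⁻¹ := by positivity
  have hmain : (∫ x in unitCube d, |g x| ^ p ∂volume) ≤ ((2:ℝ) ^ d - 1) * W ^ p := by
    rw [hQsplit]
    have step1 : ∀ (v : Fin d → Fin n) (s : Fin d → Fin 2),
        (∫ x in cubeCell d (n * 2) (childCell v s), |g x| ^ p ∂volume)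
        ≤ ∑ t ∈ Finset.univ.erase s, ((2:ℝ) ^ d)⁻¹ *
            ∫ y in cubeCell d (n * 2) (childCell v s),
              |f y - f (y + sibShift n s t)| ^ p ∂volume := by
      intro v s
      rw [hcellInt v s]
      calc κ * |c v s| ^ p
          ≤ κ * ∑ t ∈ Finset.univ.erase s, ((2:ℝ) ^ d)⁻¹ * |A v s - A v t| ^ p :=
            mul_le_mul_of_nonneg_left (hc_bound v s) hκpos.le
      _ = ∑ t ∈ Finset.univ.erase s, ((2:ℝ) ^ d)⁻¹ * (κ * |A v s - A v t| ^ p) := by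
            rw [Finset.mul_sum]
            exact Finset.sum_congr rfl fun t _ => by ring
      _ ≤ _ := Finset.sum_le_sum fun t _ =>
            mul_le_mul_of_nonneg_left (hJen v s t) h2dinv
    calc (∑ v : Fin d → Fin n, ∑ s : Fin d → Fin 2,
          ∫ x in cubeCell d (n * 2) (childCell v s), |g x| ^ p ∂volume)
        ≤ ∑ v : Fin d → Fin n, ∑ s : Fin d → Fin 2, ∑ t ∈ Finset.univ.erase s,
            ((2:ℝ) ^ d)⁻¹ * ∫ y in cubeCell d (n * 2) (childCell v s),
              |f y - f (y + sibShift n s t)| ^ p ∂volume :=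
          Finset.sum_le_sum fun v _ => Finset.sum_le_sum fun s _ => step1 v s
    _ = ∑ s : Fin d → Fin 2, ∑ t ∈ Finset.univ.erase s, ((2:ℝ) ^ d)⁻¹ *
          ∑ v : Fin d → Fin n, ∫ y in cubeCell d (n * 2) (childCell v s),
            |f y - f (y + sibShift n s t)| ^ p ∂volume := by
        rw [Finset.sum_comm]
        refine Finset.sum_congr rfl fun s _ => ?_
        rw [Finset.sum_comm]
        exact Finset.sum_congr rfl fun t _ => by rw [Finset.mul_sum]
    _ ≤ ∑ s : Fin d → Fin 2, ∑ t ∈ Finset.univ.erase s, ((2:ℝ) ^ d)⁻¹ * W ^ p :=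
        Finset.sum_le_sum fun s _ => Finset.sum_le_sum fun t _ =>
          mul_le_mul_of_nonneg_left (hST s t) h2dinv
    _ = ((2:ℝ) ^ d - 1) * W ^ p := by
        have hone : 1 ≤ 2 ^ d := Nat.one_le_two_pow
        have hcaste : ∀ s : Fin d → Fin 2,
            (((Finset.univ.erase s).card : ℕ) : ℝ) = 2 ^ d - 1 := by
          intro s
          rw [Finset.card_erase_of_mem (Finset.mem_univ s), Finset.card_univ, hcardN]
          push_cast [hone]
          ring
        rw [Finset.sum_congr rfl fun s _ => Finset.sum_const _]
        simp only [nsmul_eq_mul]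
        rw [Finset.sum_congr rfl fun s (_ : s ∈ Finset.univ) => by rw [hcaste s]]
        rw [Finset.sum_const, Finset.card_univ, hcardN, nsmul_eq_mul]
        have h2d : (0:ℝ) < 2 ^ d := by positivity
        push_cast
        field_simp
  have hLHS0 : 0 ≤ ∫ x in unitCube d, |g x| ^ p ∂volume :=
    setIntegral_nonneg unitCube_measurable fun x _ => Real.rpow_nonneg (abs_nonneg _) _
  have h2d1 : (0:ℝ) ≤ (2:ℝ) ^ d - 1 := by
    have : (1:ℝ) ≤ 2 ^ d := one_le_pow₀ (by norm_num)
    linarith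
  have hδα : δ ^ α = (d : ℝ) ^ (α / 2) * (2:ℝ) ^ (-(α * (m + 1))) := by
    have hNcast : ((n * 2 : ℕ) : ℝ) = (2:ℝ) ^ (m + 1 : ℕ) := by
      rw [hndef]
      push_cast
      rw [pow_succ]
    have hd0 : (0:ℝ) ≤ (d : ℝ) := by positivity
    rw [hδdef, hNcast, Real.mul_rpow (Real.sqrt_nonneg _) (by positivity)]
    congr 1
    · rw [Real.sqrt_eq_rpow, ← Real.rpow_mul hd0]
      congr 1
      ring
    · rw [← Real.rpow_natCast (2:ℝ) (m + 1), ← Real.rpow_neg (by norm_num : (0:ℝ) ≤ 2),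
        ← Real.rpow_mul (by norm_num : (0:ℝ) ≤ 2)]
      congr 1
      push_cast
      ring
  have hfinal : (∫ x in unitCube d, |g x| ^ p ∂volume) ^ (1/p)
      ≤ ((2:ℝ) ^ d - 1) ^ (1/p) * W := by
    have step := Real.rpow_le_rpow hLHS0 hmain (by positivity : (0:ℝ) ≤ 1/p)
    refine le_trans step ?_
    rw [Real.mul_rpow h2d1 (Real.rpow_nonneg hW0 _), ← Real.rpow_mul hW0, mul_one_div,
      div_self hp0.ne', Real.rpow_one]
  rw [hWdef, hδα] at hfinal
  calc (∫ x in unitCube d, |g x| ^ p ∂volume) ^ (1/p)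
      ≤ ((2:ℝ) ^ d - 1) ^ (1/p) * ((d : ℝ) ^ (α / 2) * (2:ℝ) ^ (-(α * (m + 1))) * L) := hfinal
  _ = ((2:ℝ) ^ d - 1) ^ (1/p) * (d : ℝ) ^ (α / 2) * (2:ℝ) ^ (-(α * (m + 1))) * L := by ring
end

section
/- Let Q = [0,1]^d and f ∈ Lip(Lᵖ(Q), α) for α ∈ (0,1], 1 ≤ p < ∞, and let f^m be the L²-projection of f onto piecewise constants on the dyadic grid of mesh 2^{−m}. Then ‖f − f^m‖_{Lᵖ(Q)} ≤ C · ‖f‖_{Lip(Lᵖ(Q),α)} · 2^{−αm} with C = (2^d − 1)^{1/p} · 2^α · d^{α/2} / (2^α − 1). -/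
open scoped ENNReal


open MeasureTheory Set

namespace Stmt3Aux


lemma measurableSet_unitCube (d : ℕ) : MeasurableSet (unitCube d) := measurableSet_Icc

lemma cell_meas (d n : ℕ) (w : Fin d → Fin n) : MeasurableSet (cubeCell d n w) :=
  MeasurableSet.univ_pi fun _ => measurableSet_Ico

lemma cell_subset {d n : ℕ} (hn : 0 < n) (w : Fin d → Fin n) :
    cubeCell d n w ⊆ unitCube d := by
  intro x hx
  have hx' := (Set.mem_univ_pi).1 hx
  constructor
  · intro k
    have h := hx' k
    have h1 : (0:ℝ) ≤ (w k : ℝ) / n := by positivity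
    exact le_trans h1 h.1
  · intro k
    have h := hx' k
    have hwk : ((w k : ℝ) + 1) ≤ n := by
      have : (w k : ℕ) + 1 ≤ n := (w k).2
      exact_mod_cast this
    have hn' : (0:ℝ) < n := by exact_mod_cast hn
    have : ((w k : ℝ) + 1) / n ≤ 1 := by
      rw [div_le_one hn']; exact hwk
    exact le_of_lt (lt_of_lt_of_le h.2 this)

lemma cell_volume {d n : ℕ} (hn : 0 < n) (w : Fin d → Fin n) :
    volume (cubeCell d n w) = ENNReal.ofReal (((n:ℝ))⁻¹ ^ d) := by
  rw [cubeCell, volume_pi_pi]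
  have hn' : (0:ℝ) < n := by exact_mod_cast hn
  have : ∀ k : Fin d, volume (Ico ((w k : ℝ) / n) (((w k : ℝ) + 1) / n))
      = ENNReal.ofReal ((n:ℝ))⁻¹ := by
    intro k
    rw [Real.volume_Ico]
    congr 1
    field_simp
    ring
  simp only [this, Finset.prod_const, Finset.card_univ, Fintype.card_fin]
  rw [← ENNReal.ofReal_pow (by positivity)]

lemma cell_disjoint {d n : ℕ} : Pairwise (Function.onFun Disjoint (cubeCell d n)) := by
  intro w w' hww'
  rw [Function.onFun, Set.disjoint_left]
  intro x hx hx'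
  apply hww'
  funext k
  have h1 := (Set.mem_univ_pi).1 hx k
  have h2 := (Set.mem_univ_pi).1 hx' k
  have hn' : (0:ℝ) < n := by exact_mod_cast (w k).pos
  have hlt1 : ((w k : ℕ) : ℝ) < (w' k : ℕ) + 1 := by
    have := lt_of_le_of_lt h1.1 h2.2
    rw [div_lt_div_iff₀ hn' hn'] at this
    exact lt_of_mul_lt_mul_right this hn'.le
  have hlt2 : ((w' k : ℕ) : ℝ) < (w k : ℕ) + 1 := by
    have := lt_of_le_of_lt h2.1 h1.2
    rw [div_lt_div_iff₀ hn' hn'] at this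
    exact lt_of_mul_lt_mul_right this hn'.le
  have e1 : (w k : ℕ) < (w' k : ℕ) + 1 := by exact_mod_cast hlt1
  have e2 : (w' k : ℕ) < (w k : ℕ) + 1 := by exact_mod_cast hlt2
  have : (w k : ℕ) = (w' k : ℕ) := by omega
  exact Fin.ext this

lemma iUnion_cell {d n : ℕ} (hn : 0 < n) :
    (⋃ w : Fin d → Fin n, cubeCell d n w) = univ.pi fun _ => Ico (0:ℝ) 1 := by
  have hn' : (0:ℝ) < n := by exact_mod_cast hn
  ext x
  constructor
  · rintro ⟨_, ⟨w, rfl⟩, hx⟩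
    intro k _
    have h := (Set.mem_univ_pi).1 hx k
    constructor
    · exact le_trans (by positivity) h.1
    · have hwk : ((w k : ℝ) + 1) ≤ n := by exact_mod_cast (w k).2
      exact lt_of_lt_of_le h.2 (by rw [div_le_one hn']; exact hwk)
  · intro hx
    have hx' : ∀ k, x k ∈ Ico (0:ℝ) 1 := fun k => hx k (mem_univ k)
    refine mem_iUnion.2 ⟨fun k => ⟨⌊(n:ℝ) * x k⌋₊, ?_⟩, ?_⟩
    · rw [Nat.floor_lt (by nlinarith [(hx' k).1])]
      nlinarith [(hx' k).2]
    · simp only [cubeCell, Set.mem_univ_pi]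
      intro k
      have h0 : (0:ℝ) ≤ (n:ℝ) * x k := by nlinarith [(hx' k).1]
      constructor
      · rw [div_le_iff₀ hn']
        calc ((⌊(n:ℝ) * x k⌋₊ : ℝ)) ≤ (n:ℝ) * x k := Nat.floor_le h0
        _ = x k * n := mul_comm _ _
      · rw [lt_div_iff₀ hn']
        calc x k * n = (n:ℝ) * x k := mul_comm _ _
        _ < ⌊(n:ℝ) * x k⌋₊ + 1 := Nat.lt_floor_add_one _

lemma unitCube_ae (d : ℕ) :
    (unitCube d : Set (Fin d → ℝ)) =ᵐ[volume] univ.pi fun _ => Ico (0:ℝ) 1 := by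
  have hsub : (univ.pi fun _ : Fin d => Ico (0:ℝ) 1) ⊆ unitCube d := by
    intro x hx
    constructor
    · intro k; exact (hx k (mem_univ k)).1
    · intro k; exact le_of_lt (hx k (mem_univ k)).2
  have h1 : volume (unitCube d \ univ.pi fun _ : Fin d => Ico (0:ℝ) 1) = 0 := by
    have hIcc : volume (unitCube d) = 1 := by
      rw [unitCube, ← Set.pi_univ_Icc, volume_pi_pi]
      simp [Real.volume_Icc]
    have hIco : volume (univ.pi fun _ : Fin d => Ico (0:ℝ) 1) = 1 := by
      rw [volume_pi_pi]; simp [Real.volume_Ico]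
    rw [measure_diff hsub (MeasurableSet.univ_pi fun _ => measurableSet_Ico).nullMeasurableSet
      (by rw [hIco]; exact ENNReal.one_ne_top), hIcc, hIco, tsub_self]
  have h2 : volume ((univ.pi fun _ : Fin d => Ico (0:ℝ) 1) \ unitCube d) = 0 := by
    rw [Set.diff_eq_empty.2 hsub]; exact measure_empty
  exact (MeasureTheory.ae_eq_set).2 ⟨h1, h2⟩

lemma norm_le_of_mem_cell {d n : ℕ} {w : Fin d → Fin n} {x h : Fin d → ℝ}
    (hn : 0 < n) (hx : x ∈ cubeCell d n w) (hxh : x + h ∈ cubeCell d n w) :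
    ‖h‖ ≤ ((n:ℝ))⁻¹ := by
  have hn' : (0:ℝ) < n := by exact_mod_cast hn
  rw [pi_norm_le_iff_of_nonneg (by positivity)]
  intro k
  have h1 := (Set.mem_univ_pi).1 hx k
  have h2 := (Set.mem_univ_pi).1 hxh k
  have hadd : (x + h) k = x k + h k := rfl
  rw [hadd] at h2
  have hdiv : ((w k : ℝ) + 1) / n = (w k : ℝ) / n + (n:ℝ)⁻¹ := by field_simp
  rw [Real.norm_eq_abs, abs_le]
  constructor <;> [skip; skip] <;> rw [hdiv] at h1 h2 <;>
    [nlinarith [h1.2, h2.1]; nlinarith [h1.1, h2.2]]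

lemma convexOn_abs_rpow {p : ℝ} (hp : 1 ≤ p) :
    ConvexOn ℝ univ (fun t : ℝ => |t| ^ p) := by
  have himg : abs '' (univ : Set ℝ) = Ici 0 := by
    rw [Set.image_univ]
    ext t
    simp only [Set.mem_range, Set.mem_Ici]
    constructor
    · rintro ⟨s, rfl⟩; exact abs_nonneg s
    · intro ht; exact ⟨t, abs_of_nonneg ht⟩
  have hmono : MonotoneOn (fun x : ℝ => x ^ p) (abs '' univ) := by
    rw [himg]
    intro a ha b hb hab
    exact Real.rpow_le_rpow ha hab (le_trans zero_le_one hp)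
  have habs : ConvexOn ℝ univ (abs : ℝ → ℝ) := by
    refine ⟨convex_univ, fun x _ y _ a b ha hb _ => ?_⟩
    simp only [smul_eq_mul]
    calc |a * x + b * y| ≤ |a * x| + |b * y| := abs_add_le _ _
      _ = a * |x| + b * |y| := by rw [abs_mul, abs_mul, abs_of_nonneg ha, abs_of_nonneg hb]
  exact ConvexOn.comp (himg ▸ convexOn_rpow hp) habs hmono

lemma continuous_abs_rpow {p : ℝ} (hp : 1 ≤ p) :
    Continuous (fun t : ℝ => |t| ^ p) :=
  (Real.continuous_rpow_const (le_trans zero_le_one hp)).comp continuous_abs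


lemma cell_jensen {d n : ℕ} (hn : 0 < n) {p : ℝ} (hp : 1 ≤ p) {g : (Fin d → ℝ) → ℝ}
    (hg : MemLp g (ENNReal.ofReal p) (volume.restrict (unitCube d))) (w : Fin d → Fin n)
    (x : Fin d → ℝ) :
    ENNReal.ofReal (|g x - ⨍ y in cubeCell d n w, g y| ^ p)
      ≤ ENNReal.ofReal ((n:ℝ) ^ d) * ∫⁻ y in cubeCell d n w, ENNReal.ofReal (|g x - g y| ^ p) := by
  have hp0 : (0:ℝ) < p := lt_of_lt_of_le one_pos hp
  set I := cubeCell d n w with hI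
  have hIm := cell_meas d n w
  have hn' : (0:ℝ) < n := by exact_mod_cast hn
  have hvol : volume I = ENNReal.ofReal (((n:ℝ))⁻¹ ^ d) := cell_volume hn w
  have hκpos : (0:ℝ) < ((n:ℝ))⁻¹ ^ d := by positivity
  haveI hfin : IsFiniteMeasure (volume.restrict I) :=
    ⟨by rw [Measure.restrict_apply_univ, hvol]; exact ENNReal.ofReal_lt_top⟩
  haveI hnz : NeZero (volume.restrict I) := by
    refine ⟨?_⟩
    rw [Ne, Measure.restrict_eq_zero, hvol, ENNReal.ofReal_eq_zero, not_le]
    exact hκpos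
  have hκ : (volume.restrict I univ).toReal = ((n:ℝ))⁻¹ ^ d := by
    rw [Measure.restrict_apply_univ, hvol, ENNReal.toReal_ofReal hκpos.le]
  -- integrability
  have hgI : MemLp g (ENNReal.ofReal p) (volume.restrict I) :=
    hg.mono_measure (Measure.restrict_mono (cell_subset hn w) le_rfl)
  have hgInt : Integrable g (volume.restrict I) :=
    hgI.integrable (ENNReal.one_le_ofReal.2 hp)
  have hsubInt : Integrable (fun y => g x - g y) (volume.restrict I) :=
    (integrable_const (g x)).sub hgInt
  have hφmem : MemLp (fun y => g x - g y) (ENNReal.ofReal p) (volume.restrict I) :=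
    (memLp_const (g x)).sub hgI
  have hφI : Integrable (fun y => |g x - g y| ^ p) (volume.restrict I) := by
    have := hφmem.integrable_norm_rpow (by simpa using hp0) ENNReal.ofReal_ne_top
    simpa [Real.norm_eq_abs, ENNReal.toReal_ofReal hp0.le] using this
  -- Jensen
  have jr : |g x - ⨍ y in I, g y| ^ p ≤ ⨍ y in I, |g x - g y| ^ p := by
    have hJ := (convexOn_abs_rpow hp).map_average_le (μ := volume.restrict I)
      ((continuous_abs_rpow hp).continuousOn) isClosed_univ
      (Filter.Eventually.of_forall fun y => mem_univ _) hsubInt (by exact hφI)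
    have havg : (⨍ y in I, (g x - g y)) = g x - ⨍ y in I, g y := by
      rw [average_eq, average_eq, integral_sub (integrable_const (g x)) hgInt, integral_const]
      rw [measureReal_def, hκ]
      simp only [smul_eq_mul]
      field_simp
    rw [havg] at hJ
    exact hJ
  calc ENNReal.ofReal (|g x - ⨍ y in I, g y| ^ p)
      ≤ ENNReal.ofReal (⨍ y in I, |g x - g y| ^ p) := ENNReal.ofReal_le_ofReal jr
    _ = ENNReal.ofReal ((((n:ℝ))⁻¹ ^ d)⁻¹ * ∫ y in I, |g x - g y| ^ p) := by
        rw [average_eq, measureReal_def, hκ, smul_eq_mul]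
    _ = ENNReal.ofReal ((((n:ℝ))⁻¹ ^ d)⁻¹) * ENNReal.ofReal (∫ y in I, |g x - g y| ^ p) := by
        rw [ENNReal.ofReal_mul (by positivity)]
    _ = ENNReal.ofReal ((n:ℝ) ^ d) * ∫⁻ y in I, ENNReal.ofReal (|g x - g y| ^ p) := by
        rw [ofReal_integral_eq_lintegral_ofReal hφI
          (Filter.Eventually.of_forall fun y => by positivity)]
        congr 2
        rw [inv_pow, inv_inv]

lemma cell_translate {d n : ℕ} (hn : 0 < n) {w : Fin d → Fin n} {x : Fin d → ℝ}
    (hx : x ∈ cubeCell d n w) (F : (Fin d → ℝ) → ℝ≥0∞) :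
    (∫⁻ y in cubeCell d n w, F y) ≤
      ∫⁻ z in Metric.closedBall (0 : Fin d → ℝ) ((n:ℝ)⁻¹),
        ({z : Fin d → ℝ | x + z ∈ unitCube d}).indicator (fun z => F (x + z)) z := by
  set I := cubeCell d n w with hI
  have hIm := cell_meas d n w
  have h1 : (∫⁻ y in I, F y) = ∫⁻ y, I.indicator F y := (lintegral_indicator hIm F).symm
  have h2 : (∫⁻ y, I.indicator F y) = ∫⁻ z, I.indicator F (x + z) :=
    (lintegral_add_left_eq_self (I.indicator F) x).symm
  have hpt : ∀ z, I.indicator F (x + z) ≤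
      (Metric.closedBall (0 : Fin d → ℝ) ((n:ℝ)⁻¹)).indicator
        (fun z => ({z : Fin d → ℝ | x + z ∈ unitCube d}).indicator (fun z => F (x + z)) z) z := by
    intro z
    by_cases hz : x + z ∈ I
    · rw [Set.indicator_of_mem hz]
      have hball : z ∈ Metric.closedBall (0 : Fin d → ℝ) ((n:ℝ)⁻¹) := by
        rw [Metric.mem_closedBall, dist_zero_right]
        exact norm_le_of_mem_cell hn hx hz
      have hQ : x + z ∈ unitCube d := cell_subset hn w hz
      rw [Set.indicator_of_mem hball, Set.indicator_of_mem (by simpa using hQ)]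
    · rw [Set.indicator_of_notMem hz]; exact bot_le
  calc (∫⁻ y in I, F y) = ∫⁻ z, I.indicator F (x + z) := by rw [h1, h2]
    _ ≤ ∫⁻ z, (Metric.closedBall (0 : Fin d → ℝ) ((n:ℝ)⁻¹)).indicator
        (fun z => ({z : Fin d → ℝ | x + z ∈ unitCube d}).indicator (fun z => F (x + z)) z) z :=
        lintegral_mono hpt
    _ = _ := lintegral_indicator (measurableSet_closedBall) _


lemma slice_bound {d : ℕ} {p : ℝ} (hp : 1 ≤ p) {f g : (Fin d → ℝ) → ℝ} (hgm : Measurable g)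
    (hg : MemLp g (ENNReal.ofReal p) (volume.restrict (unitCube d)))
    (hfg : f =ᵐ[volume.restrict (unitCube d)] g) (h : Fin d → ℝ) :
    (∫⁻ x in unitCube d, ({x : Fin d → ℝ | x + h ∈ unitCube d}).indicator
        (fun x => ENNReal.ofReal (|g x - g (x + h)| ^ p)) x)
      = ENNReal.ofReal
          (∫ x in {x ∈ unitCube d | x + h ∈ unitCube d}, |f x - f (x + h)| ^ p) ∧
    (∫ x in {x ∈ unitCube d | x + h ∈ unitCube d}, |f x - f (x + h)| ^ p) ^ (1/p)
      ≤ 2 * (eLpNorm g (ENNReal.ofReal p) (volume.restrict (unitCube d))).toReal := by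
  have hp0 : (0:ℝ) < p := lt_of_lt_of_le one_pos hp
  have hP0 : (ENNReal.ofReal p) ≠ 0 := by simpa using hp0
  have hPt : (ENNReal.ofReal p) ≠ ∞ := ENNReal.ofReal_ne_top
  set Q := unitCube d with hQdef
  set T : Set (Fin d → ℝ) := {x | x + h ∈ Q} with hTdef
  set Q' : Set (Fin d → ℝ) := Q ∩ T with hQ'def
  have hQm : MeasurableSet Q := measurableSet_unitCube d
  have hτ : Measurable (fun x : Fin d → ℝ => x + h) := measurable_add_const h
  have hTm : MeasurableSet T := hτ hQm
  have hQ'm : MeasurableSet Q' := hQm.inter hTm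
  have hsep : {x ∈ unitCube d | x + h ∈ unitCube d} = Q' := by
    ext x; simp [hQdef, hQ'def, hTdef, Set.mem_sep_iff, Set.mem_inter_iff, mem_setOf_eq]
  -- pushforward comparison
  have hmap : (volume.restrict Q').map (fun x => x + h) ≤ volume.restrict Q := by
    have hsub : Q' ⊆ (fun x : Fin d → ℝ => x + h) ⁻¹' Q := fun x hx => hx.2
    calc (volume.restrict Q').map (fun x => x + h)
        ≤ (volume.restrict ((fun x : Fin d → ℝ => x + h) ⁻¹' Q)).map (fun x => x + h) :=
          Measure.map_mono (Measure.restrict_mono hsub le_rfl) hτ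
      _ = (volume.map (fun x : Fin d → ℝ => x + h)).restrict Q :=
          (Measure.restrict_map hτ hQm).symm
      _ = volume.restrict Q := by rw [map_add_right_eq_self volume h]
  have hgQ' : MemLp g (ENNReal.ofReal p) (volume.restrict Q') :=
    hg.mono_measure (Measure.restrict_mono Set.inter_subset_left le_rfl)
  have hgτ : MemLp (fun x => g (x + h)) (ENNReal.ofReal p) (volume.restrict Q') :=
    (hg.mono_measure hmap).comp_of_map hτ.aemeasurable
  have hD : MemLp (fun x => g x - g (x + h)) (ENNReal.ofReal p) (volume.restrict Q') :=
    hgQ'.sub hgτ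
  have hInt : Integrable (fun x => |g x - g (x + h)| ^ p) (volume.restrict Q') := by
    have := hD.integrable_norm_rpow hP0 hPt
    simpa [Real.norm_eq_abs, ENNReal.toReal_ofReal hp0.le] using this
  -- a.e. equality of f-version and g-version on Q'
  have hE : volume ({x | f x ≠ g x} ∩ Q) = 0 := by
    have := hfg
    rw [Filter.EventuallyEq, ae_iff, Measure.restrict_apply' hQm] at this
    simpa using this
  have hE' : volume ((fun x : Fin d → ℝ => x + h) ⁻¹' ({x | f x ≠ g x} ∩ Q)) = 0 :=
    (measurePreserving_add_right volume h).quasiMeasurePreserving.preimage_null hE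
  have hae : (fun x => |f x - f (x + h)| ^ p) =ᵐ[volume.restrict Q']
      (fun x => |g x - g (x + h)| ^ p) := by
    have h1 : ∀ᵐ x ∂volume, x ∉ ({x | f x ≠ g x} ∩ Q) := measure_eq_zero_iff_ae_notMem.1 hE
    have h2 : ∀ᵐ x ∂volume, x ∉ ((fun x : Fin d → ℝ => x + h) ⁻¹' ({x | f x ≠ g x} ∩ Q)) :=
      measure_eq_zero_iff_ae_notMem.1 hE'
    filter_upwards [ae_restrict_of_ae h1, ae_restrict_of_ae h2, ae_restrict_mem hQ'm]
      with x hx1 hx2 hxQ'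
    have hfx : f x = g x := by
      by_contra hne; exact hx1 ⟨hne, hxQ'.1⟩
    have hfxh : f (x + h) = g (x + h) := by
      by_contra hne; exact hx2 ⟨hne, hxQ'.2⟩
    rw [hfx, hfxh]
  have hint_eq : (∫ x in {x ∈ unitCube d | x + h ∈ unitCube d}, |f x - f (x + h)| ^ p)
      = ∫ x in Q', |g x - g (x + h)| ^ p := by
    rw [hsep]
    exact integral_congr_ae hae
  constructor
  · -- the lintegral identity
    rw [lintegral_indicator hTm, Measure.restrict_restrict hTm, hint_eq]
    have : T ∩ Q = Q' := by rw [Set.inter_comm]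
    rw [this, ofReal_integral_eq_lintegral_ofReal hInt
      (Filter.Eventually.of_forall fun x => by positivity)]
  · -- the uniform bound
    have heq := hD.eLpNorm_eq_integral_rpow_norm hP0 hPt
    have htoReal : (eLpNorm (fun x => g x - g (x + h)) (ENNReal.ofReal p)
        (volume.restrict Q')).toReal
        = (∫ x in Q', |g x - g (x + h)| ^ p) ^ (1/p) := by
      rw [heq, ENNReal.toReal_ofReal (by positivity)]
      simp [Real.norm_eq_abs, ENNReal.toReal_ofReal hp0.le]
    have hbound : eLpNorm (fun x => g x - g (x + h)) (ENNReal.ofReal p) (volume.restrict Q')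
        ≤ 2 * eLpNorm g (ENNReal.ofReal p) (volume.restrict Q) := by
      have htri : eLpNorm (fun x => g x - g (x + h)) (ENNReal.ofReal p) (volume.restrict Q')
          ≤ eLpNorm g (ENNReal.ofReal p) (volume.restrict Q')
            + eLpNorm (fun x => g (x + h)) (ENNReal.ofReal p) (volume.restrict Q') := by
        exact eLpNorm_sub_le hgQ'.1 hgτ.1 (by simpa using hp)
      have h1 : eLpNorm g (ENNReal.ofReal p) (volume.restrict Q')
          ≤ eLpNorm g (ENNReal.ofReal p) (volume.restrict Q) :=
        eLpNorm_mono_measure g (Measure.restrict_mono Set.inter_subset_left le_rfl)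
      have h2 : eLpNorm (fun x => g (x + h)) (ENNReal.ofReal p) (volume.restrict Q')
          ≤ eLpNorm g (ENNReal.ofReal p) (volume.restrict Q) := by
        have hmapeq : eLpNorm g (ENNReal.ofReal p) ((volume.restrict Q').map (fun x => x + h))
            = eLpNorm (fun x => g (x + h)) (ENNReal.ofReal p) (volume.restrict Q') :=
          eLpNorm_map_measure hgm.aestronglyMeasurable hτ.aemeasurable
        rw [← hmapeq]
        exact eLpNorm_mono_measure g hmap
      calc eLpNorm (fun x => g x - g (x + h)) (ENNReal.ofReal p) (volume.restrict Q')
          ≤ _ + _ := htri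
        _ ≤ eLpNorm g (ENNReal.ofReal p) (volume.restrict Q)
            + eLpNorm g (ENNReal.ofReal p) (volume.restrict Q) := add_le_add h1 h2
        _ = 2 * eLpNorm g (ENNReal.ofReal p) (volume.restrict Q) := (two_mul _).symm
    rw [hint_eq, ← htoReal]
    have hfin : (2 : ℝ≥0∞) * eLpNorm g (ENNReal.ofReal p) (volume.restrict Q) ≠ ∞ :=
      ENNReal.mul_ne_top (by simp) hg.2.ne
    calc (eLpNorm (fun x => g x - g (x + h)) (ENNReal.ofReal p) (volume.restrict Q')).toReal
        ≤ ((2 : ℝ≥0∞) * eLpNorm g (ENNReal.ofReal p) (volume.restrict Q)).toReal :=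
          ENNReal.toReal_mono hfin hbound
      _ = 2 * (eLpNorm g (ENNReal.ofReal p) (volume.restrict Q)).toReal := by
          rw [ENNReal.toReal_mul]; norm_num


lemma const_ineq {d : ℕ} (hd : 0 < d) {p α : ℝ} (hp : 1 ≤ p) (hα1 : 0 < α) (hα2 : α ≤ 1) :
    ((2:ℝ)^d)^(1/p) ≤ ((2:ℝ)^d - 1)^(1/p) * 2^α * (d:ℝ)^(α/2) / ((2:ℝ)^α - 1) := by
  have hp0 : (0:ℝ) < p := lt_of_lt_of_le one_pos hp
  have h2d : (2:ℝ) ≤ 2^d := by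
    calc (2:ℝ) = 2^1 := (pow_one 2).symm
    _ ≤ 2^d := pow_le_pow_right₀ one_le_two hd
  have hA : (0:ℝ) < 2^α - 1 := by
    have : (1:ℝ) < 2^α := Real.one_lt_rpow one_lt_two hα1
    linarith
  have h2a2 : (2:ℝ)^α ≤ 2 := by
    calc (2:ℝ)^α ≤ 2^(1:ℝ) := Real.rpow_le_rpow_of_exponent_le one_le_two hα2
    _ = 2 := Real.rpow_one 2
  have hB : (0:ℝ) ≤ ((2:ℝ)^d - 1)^(1/p) := Real.rpow_nonneg (by linarith) _
  have hstep1 : ((2:ℝ)^d)^(1/p) ≤ 2 * ((2:ℝ)^d - 1)^(1/p) := by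
    have h1 : ((2:ℝ)^d)^(1/p) ≤ (2*((2:ℝ)^d - 1))^(1/p) :=
      Real.rpow_le_rpow (by positivity) (by linarith) (by positivity)
    have h2 : (2*((2:ℝ)^d - 1))^(1/p) = 2^((1:ℝ)/p) * ((2:ℝ)^d - 1)^(1/p) :=
      Real.mul_rpow (by norm_num) (by linarith)
    have h3 : (2:ℝ)^((1:ℝ)/p) ≤ 2 := by
      calc (2:ℝ)^((1:ℝ)/p) ≤ 2^(1:ℝ) := by
            apply Real.rpow_le_rpow_of_exponent_le one_le_two
            rw [div_le_one hp0]; exact hp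
      _ = 2 := Real.rpow_one 2
    calc ((2:ℝ)^d)^(1/p) ≤ (2*((2:ℝ)^d - 1))^(1/p) := h1
      _ = 2^((1:ℝ)/p) * ((2:ℝ)^d - 1)^(1/p) := h2
      _ ≤ 2 * ((2:ℝ)^d - 1)^(1/p) := mul_le_mul_of_nonneg_right h3 hB
  have hstep2 : (2:ℝ) ≤ 2^α / (2^α - 1) := by
    rw [le_div_iff₀ hA]; linarith
  have hstep3 : (1:ℝ) ≤ (d:ℝ)^(α/2) := by
    apply Real.one_le_rpow (by exact_mod_cast hd) (by positivity)
  have hq0 : (0:ℝ) ≤ 2^α / (2^α - 1) := by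
    apply div_nonneg (Real.rpow_nonneg (by norm_num) _) hA.le
  calc ((2:ℝ)^d)^(1/p) ≤ 2 * ((2:ℝ)^d - 1)^(1/p) := hstep1
    _ ≤ (2^α / (2^α - 1)) * ((2:ℝ)^d - 1)^(1/p) := mul_le_mul_of_nonneg_right hstep2 hB
    _ ≤ (2^α / (2^α - 1)) * ((2:ℝ)^d - 1)^(1/p) * (d:ℝ)^(α/2) :=
        le_mul_of_one_le_right (mul_nonneg hq0 hB) hstep3
    _ = ((2:ℝ)^d - 1)^(1/p) * 2^α * (d:ℝ)^(α/2) / ((2:ℝ)^α - 1) := by ring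

end Stmt3Aux

/-- for `f ∈ Lip(Lᵖ(Q), α)` and dyadic projections `f^m` of mesh `2^{−m}`,
`‖f − f^m‖_{Lᵖ(Q)} ≤ C ‖f‖_{Lip(Lᵖ(Q),α)} 2^{−αm}` with
`C = (2^d − 1)^{1/p} 2^α d^{α/2} / (2^α − 1)`. -/
theorem stmt3 (d : ℕ) (hd : 0 < d) (p α : ℝ) (hp : 1 ≤ p) (hα : α ∈ Set.Ioc (0:ℝ) 1)
    (f : (Fin d → ℝ) → ℝ) (hfLp : MemLp f (ENNReal.ofReal p) (volume.restrict (unitCube d)))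
    (hf : MemLipLp d p α f) (m : ℕ) :
    (∫ x in unitCube d, |f x - cubeProj d (2 ^ m) f x| ^ p ∂volume) ^ (1 / p)
      ≤ ((2:ℝ) ^ d - 1) ^ (1 / p) * (2:ℝ) ^ α * (d : ℝ) ^ (α / 2) / ((2:ℝ) ^ α - 1)
          * lipLpNorm d p α f * (2:ℝ) ^ (-(α * m)) := by
  obtain ⟨hα1, hα2⟩ := hα
  have hp0 : (0:ℝ) < p := lt_of_lt_of_le one_pos hp
  set n : ℕ := 2 ^ m with hndef
  have hn : 0 < n := Nat.pow_pos (by norm_num)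
  have hn' : (0:ℝ) < n := by exact_mod_cast hn
  have hε : (0:ℝ) < ((n:ℝ))⁻¹ := by positivity
  have hQm : MeasurableSet (unitCube d) := Stmt3Aux.measurableSet_unitCube d
  -- measurable representative
  obtain ⟨g, hgm, hfg⟩ := hfLp.1.aemeasurable
  have hgLp : MemLp g (ENNReal.ofReal p) (volume.restrict (unitCube d)) := hfLp.ae_eq hfg
  -- modulus nonneg
  have hmod_nonneg : ∀ δ : ℝ, 0 ≤ modulusLp d p f δ := by
    intro δ
    apply Real.iSup_nonneg
    intro h
    apply Real.rpow_nonneg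
    apply integral_nonneg
    intro x
    positivity
  set ω := modulusLp d p f ((n:ℝ)⁻¹) with hωdef
  have hω0 : 0 ≤ ω := hmod_nonneg _
  -- bounded family
  have hbdd : BddAbove (range fun h : {h : Fin d → ℝ // ‖h‖ ≤ ((n:ℝ))⁻¹} =>
      (∫ x in {x ∈ unitCube d | x + h.1 ∈ unitCube d}, |f x - f (x + h.1)| ^ p ∂volume)
        ^ (1 / p)) := by
    refine ⟨2 * (eLpNorm g (ENNReal.ofReal p) (volume.restrict (unitCube d))).toReal, ?_⟩
    rintro y ⟨h, rfl⟩
    exact (Stmt3Aux.slice_bound hp hgm hgLp hfg h.1).2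
  -- the per-translation bound
  have key8 : ∀ h : Fin d → ℝ, ‖h‖ ≤ ((n:ℝ))⁻¹ →
      (∫⁻ x in unitCube d, ({x : Fin d → ℝ | x + h ∈ unitCube d}).indicator
        (fun x => ENNReal.ofReal (|g x - g (x + h)| ^ p)) x) ≤ ENNReal.ofReal (ω ^ p) := by
    intro h hh
    rw [(Stmt3Aux.slice_bound hp hgm hgLp hfg h).1]
    apply ENNReal.ofReal_le_ofReal
    have ht0 : 0 ≤ ∫ x in {x ∈ unitCube d | x + h ∈ unitCube d}, |f x - f (x + h)| ^ p :=
      integral_nonneg fun x => by positivity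
    have hle : (∫ x in {x ∈ unitCube d | x + h ∈ unitCube d}, |f x - f (x + h)| ^ p) ^ (1/p)
        ≤ ω := le_ciSup hbdd (⟨h, hh⟩ : {h : Fin d → ℝ // ‖h‖ ≤ ((n:ℝ))⁻¹})
    calc (∫ x in {x ∈ unitCube d | x + h ∈ unitCube d}, |f x - f (x + h)| ^ p)
        = ((∫ x in {x ∈ unitCube d | x + h ∈ unitCube d}, |f x - f (x + h)| ^ p) ^ (1/p)) ^ p := by
          rw [one_div, Real.rpow_inv_rpow ht0 hp0.ne']
      _ ≤ ω ^ p := Real.rpow_le_rpow (Real.rpow_nonneg ht0 _) hle hp0.le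
  -- product-measurable kernel
  set ΨP : ((Fin d → ℝ) × (Fin d → ℝ)) → ℝ≥0∞ :=
    ({q : (Fin d → ℝ) × (Fin d → ℝ) | q.1 + q.2 ∈ unitCube d}).indicator
      (fun q => ENNReal.ofReal (|g q.1 - g (q.1 + q.2)| ^ p)) with hΨdef
  have hSm : MeasurableSet {q : (Fin d → ℝ) × (Fin d → ℝ) | q.1 + q.2 ∈ unitCube d} :=
    (measurable_fst.add measurable_snd) hQm
  have hΨm : Measurable ΨP := by
    apply Measurable.indicator _ hSm
    apply Measurable.ennreal_ofReal
    have h1 : Measurable fun q : (Fin d → ℝ) × (Fin d → ℝ) => g q.1 - g (q.1 + q.2) :=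
      (hgm.comp measurable_fst).sub (hgm.comp (measurable_fst.add measurable_snd))
    exact (Stmt3Aux.continuous_abs_rpow hp).measurable.comp h1
  have hslice_h : ∀ h x : Fin d → ℝ, ΨP (x, h) =
      ({x : Fin d → ℝ | x + h ∈ unitCube d}).indicator
        (fun x => ENNReal.ofReal (|g x - g (x + h)| ^ p)) x := by
    intro h x
    rw [hΨdef]
    by_cases hx : x + h ∈ unitCube d
    · rw [Set.indicator_of_mem (show ((x,h) : _ × _) ∈ _ from hx),
        Set.indicator_of_mem (show x ∈ {x | x + h ∈ unitCube d} from hx)]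
    · rw [Set.indicator_of_notMem (show ((x,h) : _ × _) ∉ _ from hx),
        Set.indicator_of_notMem (show x ∉ {x | x + h ∈ unitCube d} from hx)]
  have hslice_x : ∀ x z : Fin d → ℝ, ΨP (x, z) =
      ({z : Fin d → ℝ | x + z ∈ unitCube d}).indicator
        (fun z => ENNReal.ofReal (|g x - g (x + z)| ^ p)) z := by
    intro x z
    rw [hΨdef]
    by_cases hx : x + z ∈ unitCube d
    · rw [Set.indicator_of_mem (show ((x,z) : _ × _) ∈ _ from hx),
        Set.indicator_of_mem (show z ∈ {z | x + z ∈ unitCube d} from hx)]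
    · rw [Set.indicator_of_notMem (show ((x,z) : _ × _) ∉ _ from hx),
        Set.indicator_of_notMem (show z ∉ {z | x + z ∈ unitCube d} from hx)]
  -- the projection and the base integral
  set proj := cubeProj d n f with hprojdef
  have hprojm : Measurable proj := by
    apply Finset.measurable_sum
    intro w _
    exact Measurable.indicator measurable_const (Stmt3Aux.cell_meas d n w)
  set A := ∫⁻ x in unitCube d, ENNReal.ofReal (|g x - proj x| ^ p) with hAdef
  have hmeas : AEStronglyMeasurable (fun x => |f x - proj x| ^ p)
      (volume.restrict (unitCube d)) := by
    have h1 : AEStronglyMeasurable (fun x => f x - proj x) (volume.restrict (unitCube d)) :=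
      hfLp.1.sub hprojm.aestronglyMeasurable
    exact (Stmt3Aux.continuous_abs_rpow hp).comp_aestronglyMeasurable h1
  have hbase : (∫ x in unitCube d, |f x - proj x| ^ p ∂volume) = A.toReal := by
    rw [integral_eq_lintegral_of_nonneg_ae
      (Filter.Eventually.of_forall fun x => by positivity) hmeas]
    congr 1
    apply lintegral_congr_ae
    filter_upwards [hfg] with x hx
    rw [hx]
  -- decomposition over cells
  have hsum : ∀ F : (Fin d → ℝ) → ℝ≥0∞,
      (∫⁻ x in unitCube d, F x) = ∑ w : Fin d → Fin n, ∫⁻ x in cubeCell d n w, F x := by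
    intro F
    rw [setLIntegral_congr (Stmt3Aux.unitCube_ae d), ← Stmt3Aux.iUnion_cell (d := d) hn,
      lintegral_iUnion (fun w => Stmt3Aux.cell_meas d n w) Stmt3Aux.cell_disjoint F,
      tsum_fintype]
  -- projection equals the cell average of g on each cell
  have hc : ∀ w : Fin d → Fin n, ∀ x ∈ cubeCell d n w,
      proj x = ⨍ y in cubeCell d n w, g y := by
    intro w x hx
    have havg : (⨍ y in cubeCell d n w, f y) = ⨍ y in cubeCell d n w, g y :=
      average_congr (hfg.filter_mono
        (ae_mono (Measure.restrict_mono (Stmt3Aux.cell_subset hn w) le_rfl)))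
    rw [hprojdef]
    simp only [cubeProj]
    rw [Finset.sum_eq_single w]
    · rw [Set.indicator_of_mem hx]; exact havg
    · intro w' _ hw'
      apply Set.indicator_of_notMem
      intro hx'
      exact Set.disjoint_left.1 (Stmt3Aux.cell_disjoint hw') hx' hx
    · intro hw; exact absurd (Finset.mem_univ w) hw
  -- main lintegral estimate
  have hAle : A ≤ ENNReal.ofReal ((n:ℝ)^d) *
      ∫⁻ x in unitCube d, ∫⁻ z in Metric.closedBall (0 : Fin d → ℝ) ((n:ℝ)⁻¹), ΨP (x, z) := by
    calc A = ∑ w : Fin d → Fin n, ∫⁻ x in cubeCell d n w,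
          ENNReal.ofReal (|g x - proj x| ^ p) := hsum _
      _ = ∑ w : Fin d → Fin n, ∫⁻ x in cubeCell d n w,
          ENNReal.ofReal (|g x - ⨍ y in cubeCell d n w, g y| ^ p) := by
          apply Finset.sum_congr rfl
          intro w _
          apply setLIntegral_congr_fun (Stmt3Aux.cell_meas d n w)
          intro x hx
          simp only [hc w x hx]
      _ ≤ ∑ w : Fin d → Fin n, ENNReal.ofReal ((n:ℝ)^d) * ∫⁻ x in cubeCell d n w,
            ∫⁻ z in Metric.closedBall (0 : Fin d → ℝ) ((n:ℝ)⁻¹), ΨP (x, z) := by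
          apply Finset.sum_le_sum
          intro w _
          calc (∫⁻ x in cubeCell d n w,
              ENNReal.ofReal (|g x - ⨍ y in cubeCell d n w, g y| ^ p))
              ≤ ∫⁻ x in cubeCell d n w, ENNReal.ofReal ((n:ℝ)^d) *
                  ∫⁻ y in cubeCell d n w, ENNReal.ofReal (|g x - g y| ^ p) :=
                lintegral_mono fun x => Stmt3Aux.cell_jensen hn hp hgLp w x
            _ = ENNReal.ofReal ((n:ℝ)^d) * ∫⁻ x in cubeCell d n w,
                  ∫⁻ y in cubeCell d n w, ENNReal.ofReal (|g x - g y| ^ p) :=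
                lintegral_const_mul' _ _ ENNReal.ofReal_ne_top
            _ ≤ ENNReal.ofReal ((n:ℝ)^d) * ∫⁻ x in cubeCell d n w,
                  ∫⁻ z in Metric.closedBall (0 : Fin d → ℝ) ((n:ℝ)⁻¹), ΨP (x, z) := by
                apply mul_le_mul_right
                apply lintegral_mono_ae
                filter_upwards [ae_restrict_mem (Stmt3Aux.cell_meas d n w)] with x hx
                refine le_trans
                  (Stmt3Aux.cell_translate hn hx (fun y => ENNReal.ofReal (|g x - g y| ^ p)))
                  (le_of_eq ?_)
                apply lintegral_congr
                intro z
                rw [hslice_x x z]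
      _ = ENNReal.ofReal ((n:ℝ)^d) * ∑ w : Fin d → Fin n, ∫⁻ x in cubeCell d n w,
            ∫⁻ z in Metric.closedBall (0 : Fin d → ℝ) ((n:ℝ)⁻¹), ΨP (x, z) :=
          (Finset.mul_sum _ _ _).symm
      _ = ENNReal.ofReal ((n:ℝ)^d) * ∫⁻ x in unitCube d,
            ∫⁻ z in Metric.closedBall (0 : Fin d → ℝ) ((n:ℝ)⁻¹), ΨP (x, z) := by
          rw [← hsum _]
  -- Tonelli
  have hswap : (∫⁻ x in unitCube d,
        ∫⁻ z in Metric.closedBall (0 : Fin d → ℝ) ((n:ℝ)⁻¹), ΨP (x, z))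
      = ∫⁻ z in Metric.closedBall (0 : Fin d → ℝ) ((n:ℝ)⁻¹),
          ∫⁻ x in unitCube d, ΨP (x, z) := by
    apply lintegral_lintegral_swap
    have huncurry : Function.uncurry (fun x z : Fin d → ℝ => ΨP (x, z)) = ΨP := by
      funext q; rcases q with ⟨x, z⟩; rfl
    rw [huncurry]
    exact hΨm.aemeasurable
  have hfinal_lin : A ≤ ENNReal.ofReal ((2:ℝ)^d * ω^p) := by
    have hvolB : volume (Metric.closedBall (0 : Fin d → ℝ) ((n:ℝ)⁻¹))
        = ENNReal.ofReal ((2 * ((n:ℝ))⁻¹)^d) := by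
      rw [Real.volume_pi_closedBall 0 hε.le]
      congr 1
      simp
    calc A ≤ ENNReal.ofReal ((n:ℝ)^d) * ∫⁻ x in unitCube d,
          ∫⁻ z in Metric.closedBall (0 : Fin d → ℝ) ((n:ℝ)⁻¹), ΨP (x, z) := hAle
      _ = ENNReal.ofReal ((n:ℝ)^d) * ∫⁻ z in Metric.closedBall (0 : Fin d → ℝ) ((n:ℝ)⁻¹),
            ∫⁻ x in unitCube d, ΨP (x, z) := by rw [hswap]
      _ ≤ ENNReal.ofReal ((n:ℝ)^d) * ∫⁻ _z in Metric.closedBall (0 : Fin d → ℝ) ((n:ℝ)⁻¹),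
            ENNReal.ofReal (ω ^ p) := by
          apply mul_le_mul_right
          apply lintegral_mono_ae
          filter_upwards [ae_restrict_mem measurableSet_closedBall] with z hz
          have hz' : ‖z‖ ≤ ((n:ℝ))⁻¹ := by
            rwa [Metric.mem_closedBall, dist_zero_right] at hz
          refine le_trans (le_of_eq ?_) (key8 z hz')
          apply lintegral_congr
          intro x
          rw [hslice_h z x]
      _ = ENNReal.ofReal ((n:ℝ)^d) *
            (ENNReal.ofReal (ω ^ p) * ENNReal.ofReal ((2 * ((n:ℝ))⁻¹)^d)) := by
          rw [setLIntegral_const, hvolB]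
      _ = ENNReal.ofReal ((n:ℝ)^d * (ω ^ p * (2 * ((n:ℝ))⁻¹)^d)) := by
          rw [ENNReal.ofReal_mul (by positivity), ENNReal.ofReal_mul (Real.rpow_nonneg hω0 _)]
      _ = ENNReal.ofReal ((2:ℝ)^d * ω^p) := by
          congr 1
          rw [mul_pow, inv_pow]
          have hnd : ((n:ℝ))^d ≠ 0 := by positivity
          field_simp
  have hA_toReal : A.toReal ≤ (2:ℝ)^d * ω^p :=
    ENNReal.toReal_le_of_le_ofReal
      (mul_nonneg (by positivity) (Real.rpow_nonneg hω0 _)) hfinal_lin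
  -- Lipschitz-norm facts
  obtain ⟨C, hC⟩ := hf
  have hlip_bdd : BddAbove (range fun δ : {δ : ℝ // 0 < δ} =>
      (δ.1) ^ (-α) * modulusLp d p f δ.1) := by
    refine ⟨C, ?_⟩
    rintro y ⟨δ, rfl⟩
    have hδ := δ.2
    have h1 : modulusLp d p f δ.1 ≤ C * δ.1 ^ α := hC δ.1 hδ
    have h2 : (0:ℝ) < δ.1 ^ (-α) := Real.rpow_pos_of_pos hδ _
    calc (δ.1) ^ (-α) * modulusLp d p f δ.1 ≤ (δ.1) ^ (-α) * (C * δ.1 ^ α) :=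
        mul_le_mul_of_nonneg_left h1 h2.le
      _ = C * ((δ.1) ^ (-α) * δ.1 ^ α) := by ring
      _ = C := by rw [← Real.rpow_add hδ]; simp
  have hlip0 : 0 ≤ lipLpNorm d p α f := by
    apply Real.iSup_nonneg
    intro δ
    exact mul_nonneg (Real.rpow_nonneg δ.2.le _) (hmod_nonneg δ.1)
  have hωlip : ω ≤ lipLpNorm d p α f * (((n:ℝ))⁻¹) ^ α := by
    have h1 : (((n:ℝ))⁻¹) ^ (-α) * ω ≤ lipLpNorm d p α f :=
      le_ciSup hlip_bdd (⟨((n:ℝ))⁻¹, hε⟩ : {δ : ℝ // 0 < δ})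
    have h2 : (((n:ℝ))⁻¹) ^ (-α) * (((n:ℝ))⁻¹) ^ α = 1 := by
      rw [← Real.rpow_add hε]; simp
    calc ω = ((((n:ℝ))⁻¹) ^ (-α) * (((n:ℝ))⁻¹) ^ α) * ω := by rw [h2, one_mul]
      _ = (((n:ℝ))⁻¹) ^ α * ((((n:ℝ))⁻¹) ^ (-α) * ω) := by ring
      _ ≤ (((n:ℝ))⁻¹) ^ α * lipLpNorm d p α f :=
        mul_le_mul_of_nonneg_left h1 (Real.rpow_nonneg hε.le _)
      _ = lipLpNorm d p α f * (((n:ℝ))⁻¹) ^ α := mul_comm _ _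
  have hεα : (((n:ℝ))⁻¹) ^ α = (2:ℝ) ^ (-(α * m)) := by
    rw [hndef]
    push_cast
    rw [← Real.rpow_natCast (2:ℝ) m, ← Real.rpow_neg (by norm_num),
      ← Real.rpow_mul (by norm_num)]
    congr 1
    ring
  -- final chain
  rw [hbase]
  calc A.toReal ^ (1/p) ≤ ((2:ℝ)^d * ω^p) ^ (1/p) :=
      Real.rpow_le_rpow ENNReal.toReal_nonneg hA_toReal (by positivity)
    _ = ((2:ℝ)^d) ^ (1/p) * ω := by
        rw [Real.mul_rpow (by positivity) (Real.rpow_nonneg hω0 _), one_div,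
          Real.rpow_rpow_inv hω0 hp0.ne']
    _ ≤ ((2:ℝ)^d) ^ (1/p) * (lipLpNorm d p α f * (((n:ℝ))⁻¹) ^ α) :=
        mul_le_mul_of_nonneg_left hωlip (by positivity)
    _ = (((2:ℝ)^d) ^ (1/p) * lipLpNorm d p α f) * (2:ℝ) ^ (-(α * m)) := by
        rw [hεα]; ring
    _ ≤ (((2:ℝ) ^ d - 1) ^ (1 / p) * (2:ℝ) ^ α * (d : ℝ) ^ (α / 2) / ((2:ℝ) ^ α - 1)
          * lipLpNorm d p α f) * (2:ℝ) ^ (-(α * m)) := by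
        apply mul_le_mul_of_nonneg_right _ (Real.rpow_nonneg (by norm_num) _)
        exact mul_le_mul_of_nonneg_right (Stmt3Aux.const_ineq hd hp hα1 hα2) hlip0
    _ = _ := by ring
end

section
/- Let K be the Sierpinski triangle with standard self-similar measure μ, and suppose φ ∈ C(K) extends to a function twice continuously differentiable along each of the three edge directions of the triangle with uniformly bounded second directional derivatives. Then the vertex quadrature S_N = 3^{−(m+1)} Σ_{|w|=m} Σ_{j=1}^3 φ(q^w_j) satisfies |∫_K φ dμ − S_N| = O(h²) with h = 2^{−m}. -/
open MeasureTheory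
open scoped ENNReal

/-- Vertices of an equilateral triangle with side length 1. -/
noncomputable def stVertex : Fin 3 → ℝ × ℝ
  | 0 => (0, 0)
  | 1 => (1, 0)
  | 2 => (1 / 2, Real.sqrt 3 / 2)

/-- The three contractions `Fᵢ(x) = (x − vᵢ)/2 + vᵢ` generating the Sierpinski triangle. -/
noncomputable def stMap (i : Fin 3) (x : ℝ × ℝ) : ℝ × ℝ :=
  (1 / 2 : ℝ) • (x - stVertex i) + stVertex i

/-- `F_w = F_{w₁} ∘ ⋯ ∘ F_{w_m}` for a word `w` of length `m`. -/
noncomputable def stWordMap {m : ℕ} (w : Fin m → Fin 3) : ℝ × ℝ → ℝ × ℝ :=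
  ((List.ofFn w).map stMap).foldr (· ∘ ·) id

/-- The vertex quadrature `S_N = 3^{−(m+1)} Σ_{|w|=m} Σ_{j=1}^3 φ(q^w_j)`,
where `q^w_j = F_w(v_j)` are the vertices of the level-`m` cell `K_w`. -/
noncomputable def stQuad (φ : ℝ × ℝ → ℝ) (m : ℕ) : ℝ :=
  (1 / 3 ^ (m + 1) : ℝ) * ∑ w : Fin m → Fin 3, ∑ j : Fin 3, φ (stWordMap w (stVertex j))

lemma stMap_sub (i : Fin 3) (x y : ℝ × ℝ) : stMap i x - stMap i y = (1/2 : ℝ) • (x - y) := by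
  simp only [stMap]; module

lemma stMap_mid (i : Fin 3) (x y : ℝ × ℝ) :
    stMap i ((1/2:ℝ) • (x + y)) = (1/2:ℝ) • (stMap i x + stMap i y) := by
  simp only [stMap]; module

lemma stMap_vertex (i j : Fin 3) :
    stMap i (stVertex j) = (1/2:ℝ) • (stVertex i + stVertex j) := by
  simp only [stMap]; module

lemma stMap_continuous (i : Fin 3) : Continuous (stMap i) := by
  unfold stMap; fun_prop

lemma stWordMap_nil (w : Fin 0 → Fin 3) : stWordMap w = id := rfl

lemma stWordMap_cons {m : ℕ} (i : Fin 3) (w : Fin m → Fin 3) :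
    stWordMap (Fin.cons i w) = stMap i ∘ stWordMap w := by
  simp [stWordMap, List.ofFn_succ]

lemma foldr_comp_base {α : Type*} (l : List (α → α)) (g : α → α) :
    l.foldr (· ∘ ·) g = l.foldr (· ∘ ·) id ∘ g := by
  induction l with
  | nil => rfl
  | cons a l ih => simp only [List.foldr_cons, ih]; rfl

lemma foldr_comp_concat {α : Type*} (l : List (α → α)) (g : α → α) :
    (l.concat g).foldr (· ∘ ·) id = l.foldr (· ∘ ·) id ∘ g := by
  rw [List.concat_eq_append, List.foldr_append]
  exact foldr_comp_base l g

lemma stWordMap_snoc {m : ℕ} (w : Fin m → Fin 3) (i : Fin 3) :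
    stWordMap (Fin.snoc w i) = stWordMap w ∘ stMap i := by
  unfold stWordMap
  rw [List.ofFn_succ']
  simp only [Fin.snoc_castSucc, Fin.snoc_last, List.map_concat, foldr_comp_concat]

lemma stWordMap_sub {m : ℕ} (w : Fin m → Fin 3) (x y : ℝ × ℝ) :
    stWordMap w x - stWordMap w y = ((1/2:ℝ)^m) • (x - y) := by
  induction m with
  | zero => simp [stWordMap_nil]
  | succ n ih =>
      rw [← Fin.cons_self_tail w, stWordMap_cons]
      simp only [Function.comp_apply, stMap_sub, ih, smul_smul]
      rw [pow_succ]; ring_nf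

lemma stWordMap_mid {m : ℕ} (w : Fin m → Fin 3) (x y : ℝ × ℝ) :
    stWordMap w ((1/2:ℝ) • (x + y)) = (1/2:ℝ) • (stWordMap w x + stWordMap w y) := by
  induction m with
  | zero => simp [stWordMap_nil]
  | succ n ih =>
      rw [← Fin.cons_self_tail w, stWordMap_cons]
      simp only [Function.comp_apply, ih, stMap_mid]

lemma stWordMap_continuous {m : ℕ} (w : Fin m → Fin 3) : Continuous (stWordMap w) := by
  induction m with
  | zero => rw [stWordMap_nil]; exact continuous_id
  | succ n ih =>
      rw [← Fin.cons_self_tail w, stWordMap_cons]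
      exact (stMap_continuous _).comp (ih _)

/-- key vertex relation -/
lemma stWordMap_snoc_vertex {m : ℕ} (w : Fin m → Fin 3) (i j : Fin 3) :
    stWordMap (Fin.snoc w i) (stVertex j)
      = (1/2:ℝ) • (stWordMap w (stVertex i) + stWordMap w (stVertex j)) := by
  rw [stWordMap_snoc]
  simp only [Function.comp_apply, stMap_vertex, stWordMap_mid]

def snocEquiv (m : ℕ) : ((Fin m → Fin 3) × Fin 3) ≃ (Fin (m+1) → Fin 3) where
  toFun p := Fin.snoc p.1 p.2
  invFun f := (Fin.init f, f (Fin.last m))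
  left_inv p := by simp [Fin.init_snoc]
  right_inv f := by simp [Fin.snoc_init_self]

lemma dist_stWordMap {m : ℕ} (w : Fin m → Fin 3) (x y : ℝ × ℝ) :
    dist (stWordMap w x) (stWordMap w y) = (1/2:ℝ)^m * dist x y := by
  rw [dist_eq_norm, dist_eq_norm, stWordMap_sub, norm_smul]
  simp [abs_of_nonneg]

open Set in
lemma mid_est (g : ℝ → ℝ) (hg : ContDiff ℝ 2 g) (M : ℝ)
    (hM : ∀ t, |iteratedDeriv 2 g t| ≤ M) (h : ℝ) (hh : 0 < h) :
    |g (h/2) - (g 0 + g h)/2| ≤ (max M 0) * h^2 := by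
  set M' := max M 0 with hM'
  have hM0 : 0 ≤ M' := le_max_right _ _
  have hgd : Differentiable ℝ g := hg.differentiable (by norm_num)
  have hg' : ContDiff ℝ 1 (deriv g) := by
    have := (contDiff_succ_iff_deriv (f := g) (n := 1)).mp (by rw [show ((1:WithTop ℕ∞) + 1) = 2 by norm_num]; exact hg)
    exact this.2.2
  have hg'd : Differentiable ℝ (deriv g) := hg'.differentiable one_ne_zero
  have hlip : LipschitzWith M'.toNNReal (deriv g) := by
    apply lipschitzWith_of_nnnorm_deriv_le hg'd
    intro x
    have : deriv (deriv g) x = iteratedDeriv 2 g x := by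
      rw [iteratedDeriv_succ, iteratedDeriv_one]
    rw [← NNReal.coe_le_coe]
    simp only [coe_nnnorm, Real.coe_toNNReal _ hM0, Real.norm_eq_abs, this]
    exact (hM x).trans (le_max_left _ _)
  have h2 : (0:ℝ) < h/2 := by linarith
  obtain ⟨c₁, hc₁, e₁⟩ := exists_deriv_eq_slope g h2 (hgd.continuous.continuousOn)
    (fun x _ => (hgd x).differentiableWithinAt)
  obtain ⟨c₂, hc₂, e₂⟩ := exists_deriv_eq_slope g (show h/2 < h by linarith)
    (hgd.continuous.continuousOn) (fun x _ => (hgd x).differentiableWithinAt)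
  have e₁' : g (h/2) - g 0 = (h/2) * deriv g c₁ := by
    rw [e₁, sub_zero]; field_simp
  have e₂' : g h - g (h/2) = (h/2) * deriv g c₂ := by
    have hne : h - h/2 = h/2 := by ring
    rw [hne] at e₂
    rw [e₂]; field_simp
  have key : g (h/2) - (g 0 + g h)/2 = (h/4) * (deriv g c₁ - deriv g c₂) := by
    have : g (h/2) - (g 0 + g h)/2 = ((g (h/2) - g 0) - (g h - g (h/2)))/2 := by ring
    rw [this, e₁', e₂']; ring
  rw [key, abs_mul]
  have hd : |deriv g c₁ - deriv g c₂| ≤ M' * h := by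
    have := hlip.dist_le_mul c₁ c₂
    rw [Real.dist_eq, Real.dist_eq, Real.coe_toNNReal _ hM0] at this
    refine this.trans ?_
    have : |c₁ - c₂| ≤ h := by
      rw [abs_le]
      constructor <;> [linarith [hc₁.1, hc₂.2]; linarith [hc₁.2, hc₂.1]]
    nlinarith
  have h4 : |h/4| = h/4 := abs_of_pos (by linarith)
  rw [h4]
  nlinarith

lemma stVertex_mem (K : Set (ℝ × ℝ)) (hKne : K.Nonempty) (hKc : IsCompact K)
    (hK : K = ⋃ i, stMap i '' K) (j : Fin 3) : stVertex j ∈ K := by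
  have hmaps : ∀ x ∈ K, stMap j x ∈ K := by
    intro x hx
    rw [hK]
    exact Set.mem_iUnion.2 ⟨j, Set.mem_image_of_mem _ hx⟩
  obtain ⟨x₀, hx₀⟩ := hKne
  have hfix : stMap j (stVertex j) = stVertex j := by simp [stMap]
  have hmem : ∀ n, (stMap j)^[n] x₀ ∈ K := by
    intro n
    induction n with
    | zero => simpa using hx₀
    | succ n ih => rw [Function.iterate_succ_apply']; exact hmaps _ ih
  have hdist : ∀ n, dist ((stMap j)^[n] x₀) (stVertex j) = (1/2:ℝ)^n * dist x₀ (stVertex j) := by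
    intro n
    induction n with
    | zero => simp
    | succ n ih =>
        rw [Function.iterate_succ_apply']
        have : dist (stMap j ((stMap j)^[n] x₀)) (stVertex j)
            = (1/2:ℝ) * dist ((stMap j)^[n] x₀) (stVertex j) := by
          conv_lhs => rw [← hfix]
          rw [dist_eq_norm, stMap_sub, norm_smul, ← dist_eq_norm]
          norm_num
        rw [this, ih, pow_succ]; ring
  have htend : Filter.Tendsto (fun n => (stMap j)^[n] x₀) Filter.atTop (nhds (stVertex j)) := by
    rw [tendsto_iff_dist_tendsto_zero]
    simp only [hdist]
    have := (tendsto_pow_atTop_nhds_zero_of_lt_one (by norm_num : (0:ℝ) ≤ 1/2)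
      (by norm_num : (1/2:ℝ) < 1)).mul_const (dist x₀ (stVertex j))
    simpa using this
  exact hKc.isClosed.mem_of_tendsto htend (Filter.Eventually.of_forall hmem)

lemma stK_eq_iUnion (K : Set (ℝ × ℝ)) (hK : K = ⋃ i, stMap i '' K) (m : ℕ) :
    K = ⋃ w : Fin m → Fin 3, stWordMap w '' K := by
  induction m with
  | zero =>
      have : ∀ w : Fin 0 → Fin 3, stWordMap w '' K = K := fun w => by simp [stWordMap_nil]
      simp only [this]
      exact (Set.iUnion_const K).symm
  | succ n ih =>
      rw [← ((snocEquiv n).surjective.iUnion_comp (fun w => stWordMap w '' K))]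
      have : ∀ p : (Fin n → Fin 3) × Fin 3,
          stWordMap (snocEquiv n p) '' K = stWordMap p.1 '' (stMap p.2 '' K) := by
        intro p
        rw [show (snocEquiv n p) = Fin.snoc p.1 p.2 from rfl, stWordMap_snoc, Set.image_comp]
      calc K = ⋃ w : Fin n → Fin 3, stWordMap w '' K := ih
        _ = ⋃ w : Fin n → Fin 3, ⋃ i : Fin 3, stWordMap w '' (stMap i '' K) := by
            apply Set.iUnion_congr; intro w
            rw [← Set.image_iUnion, ← hK]
        _ = ⋃ p : (Fin n → Fin 3) × Fin 3, stWordMap (snocEquiv n p) '' K := by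
            rw [Set.iUnion_prod']
            exact Set.iUnion_congr fun w => Set.iUnion_congr fun i => (this (w, i)).symm

lemma sum3_avg (a : Fin 3 → ℝ) : ∑ i : Fin 3, ∑ j : Fin 3, (a i + a j)/2 = 3 * ∑ j : Fin 3, a j := by
  simp [Fin.sum_univ_three]; ring

lemma term_bound (φ : ℝ × ℝ → ℝ) (M : ℝ)
    (hdir : ∀ i j : Fin 3, i ≠ j → ∀ x : ℝ × ℝ,
      ContDiff ℝ 2 (fun t : ℝ => φ (x + t • (stVertex j - stVertex i))))
    (hM : ∀ i j : Fin 3, i ≠ j → ∀ (x : ℝ × ℝ) (t : ℝ),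
      |iteratedDeriv 2 (fun s : ℝ => φ (x + s • (stVertex j - stVertex i))) t| ≤ M)
    {m : ℕ} (w : Fin m → Fin 3) (i j : Fin 3) :
    |φ ((1/2:ℝ) • (stWordMap w (stVertex i) + stWordMap w (stVertex j)))
      - (φ (stWordMap w (stVertex i)) + φ (stWordMap w (stVertex j)))/2|
      ≤ (max M 0) * ((1/2:ℝ)^m)^2 := by
  set qi := stWordMap w (stVertex i) with hqi
  set qj := stWordMap w (stVertex j) with hqj
  rcases eq_or_ne i j with rfl | hne
  · have : (1/2:ℝ) • (qi + qi) = qi := by module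
    rw [this]
    have h0 : |φ qi - (φ qi + φ qi)/2| = 0 := by rw [abs_eq_zero]; ring
    rw [h0]
    positivity
  · set h : ℝ := (1/2:ℝ)^m with hh
    have hhpos : 0 < h := by positivity
    have hsub : qj - qi = h • (stVertex j - stVertex i) := by
      rw [hqi, hqj, stWordMap_sub]
    have hqj' : qj = qi + h • (stVertex j - stVertex i) := by
      rw [← hsub]; abel
    set g : ℝ → ℝ := fun t => φ (qi + t • (stVertex j - stVertex i)) with hg
    have h0 : g 0 = φ qi := by simp [hg]
    have h1 : g h = φ qj := by
      show φ (qi + h • (stVertex j - stVertex i)) = φ qj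
      rw [hqj']
    have h2 : g (h/2) = φ ((1/2:ℝ) • (qi + qj)) := by
      show φ (qi + (h/2) • (stVertex j - stVertex i)) = φ ((1/2:ℝ) • (qi + qj))
      congr 1
      rw [hqj']
      module
    have := mid_est g (hdir i j hne qi) M (fun t => hM i j hne qi t) h hhpos
    rw [h0, h1, h2] at this
    calc |φ ((1/2:ℝ) • (qi + qj)) - (φ qi + φ qj)/2| ≤ max M 0 * h^2 := this
      _ = max M 0 * ((1/2:ℝ)^m)^2 := by rw [hh]

lemma step_bound (φ : ℝ × ℝ → ℝ) (M : ℝ)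
    (hdir : ∀ i j : Fin 3, i ≠ j → ∀ x : ℝ × ℝ,
      ContDiff ℝ 2 (fun t : ℝ => φ (x + t • (stVertex j - stVertex i))))
    (hM : ∀ i j : Fin 3, i ≠ j → ∀ (x : ℝ × ℝ) (t : ℝ),
      |iteratedDeriv 2 (fun s : ℝ => φ (x + s • (stVertex j - stVertex i))) t| ≤ M)
    (m : ℕ) :
    |stQuad φ (m+1) - stQuad φ m| ≤ (max M 0) * ((1/2:ℝ)^m)^2 := by
  classical
  set q : (Fin m → Fin 3) → Fin 3 → ℝ × ℝ := fun w j => stWordMap w (stVertex j) with hq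
  set B := (max M 0) * ((1/2:ℝ)^m)^2 with hB
  have hB0 : 0 ≤ B := by positivity
  have hre : stQuad φ (m+1)
      = (1 / 3 ^ (m + 2) : ℝ) * ∑ w : Fin m → Fin 3, ∑ i : Fin 3, ∑ j : Fin 3,
        φ ((1/2:ℝ) • (q w i + q w j)) := by
    unfold stQuad
    rw [← Fintype.sum_equiv (snocEquiv m)
      (fun p => ∑ j : Fin 3, φ (stWordMap (snocEquiv m p) (stVertex j)))
      (fun w' => ∑ j : Fin 3, φ (stWordMap w' (stVertex j))) (fun p => rfl)]
    rw [Fintype.sum_prod_type]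
    congr 1
    apply Finset.sum_congr rfl
    intro w _
    apply Finset.sum_congr rfl
    intro i _
    apply Finset.sum_congr rfl
    intro j _
    congr 1
    exact stWordMap_snoc_vertex w i j
  have hSm : stQuad φ m = (1 / 3 ^ (m + 2) : ℝ) * ∑ w : Fin m → Fin 3, ∑ i : Fin 3, ∑ j : Fin 3,
      (φ (q w i) + φ (q w j))/2 := by
    unfold stQuad
    have : ∀ w : Fin m → Fin 3, ∑ i : Fin 3, ∑ j : Fin 3, (φ (q w i) + φ (q w j))/2
        = 3 * ∑ j : Fin 3, φ (q w j) := fun w => sum3_avg (fun j => φ (q w j))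
    rw [Finset.sum_congr rfl (fun w _ => this w), ← Finset.mul_sum]
    rw [pow_succ (3:ℝ) (m+1)]
    ring
  rw [hre, hSm, ← mul_sub, ← Finset.sum_sub_distrib]
  simp only [← Finset.sum_sub_distrib]
  rw [abs_mul]
  have hcard : (Finset.univ : Finset (Fin m → Fin 3)).card = 3^m := by
    simp [Fintype.card_fun]
  have habs : |∑ w : Fin m → Fin 3, ∑ i : Fin 3, ∑ j : Fin 3,
      (φ ((1/2:ℝ) • (q w i + q w j)) - (φ (q w i) + φ (q w j))/2)| ≤ (3^m * 9 : ℝ) * B := by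
    refine (Finset.abs_sum_le_sum_abs _ _).trans ?_
    have hw : ∀ w : Fin m → Fin 3, |∑ i : Fin 3, ∑ j : Fin 3,
        (φ ((1/2:ℝ) • (q w i + q w j)) - (φ (q w i) + φ (q w j))/2)| ≤ 9 * B := by
      intro w
      refine (Finset.abs_sum_le_sum_abs _ _).trans ?_
      have hi : ∀ i : Fin 3, |∑ j : Fin 3,
          (φ ((1/2:ℝ) • (q w i + q w j)) - (φ (q w i) + φ (q w j))/2)| ≤ 3 * B := by
        intro i
        refine (Finset.abs_sum_le_sum_abs _ _).trans ?_
        have hj : ∀ j : Fin 3, |φ ((1/2:ℝ) • (q w i + q w j)) - (φ (q w i) + φ (q w j))/2| ≤ B :=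
          fun j => term_bound φ M hdir hM w i j
        calc ∑ j : Fin 3, |φ ((1/2:ℝ) • (q w i + q w j)) - (φ (q w i) + φ (q w j))/2|
            ≤ ∑ _j : Fin 3, B := Finset.sum_le_sum (fun j _ => hj j)
          _ = 3 * B := by rw [Fin.sum_univ_three]; ring
      calc ∑ i : Fin 3, |∑ j : Fin 3,
          (φ ((1/2:ℝ) • (q w i + q w j)) - (φ (q w i) + φ (q w j))/2)|
          ≤ ∑ _i : Fin 3, 3 * B := Finset.sum_le_sum (fun i _ => hi i)
        _ = 9 * B := by rw [Fin.sum_univ_three]; ring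
    calc ∑ w : Fin m → Fin 3, |∑ i : Fin 3, ∑ j : Fin 3,
        (φ ((1/2:ℝ) • (q w i + q w j)) - (φ (q w i) + φ (q w j))/2)|
        ≤ ∑ _w : Fin m → Fin 3, 9 * B := Finset.sum_le_sum (fun w _ => hw w)
      _ = (3^m * 9 : ℝ) * B := by
          rw [Finset.sum_const, hcard, nsmul_eq_mul]
          push_cast
          ring
  calc |(1 / 3 ^ (m + 2) : ℝ)| * |∑ w : Fin m → Fin 3, ∑ i : Fin 3, ∑ j : Fin 3,
      (φ ((1/2:ℝ) • (q w i + q w j)) - (φ (q w i) + φ (q w j))/2)|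
      ≤ (1 / 3 ^ (m + 2) : ℝ) * ((3^m * 9 : ℝ) * B) := by
        rw [abs_of_pos (by positivity)]
        exact mul_le_mul_of_nonneg_left habs (by positivity)
    _ = B := by
        rw [pow_succ, pow_succ]
        field_simp
        ring

lemma quad_tendsto (K : Set (ℝ × ℝ)) (hKne : K.Nonempty) (hKc : IsCompact K)
    (hK : K = ⋃ i, stMap i '' K)
    (μ : Measure (ℝ × ℝ)) [IsProbabilityMeasure μ] (hμK : μ Kᶜ = 0)
    (hμ : ∀ (m : ℕ) (w : Fin m → Fin 3), μ (stWordMap w '' K) = (1 / 3 : ℝ≥0∞) ^ m)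
    (φ : ℝ × ℝ → ℝ) (hφc : Continuous φ) :
    Filter.Tendsto (stQuad φ) Filter.atTop (nhds (∫ x, φ x ∂μ)) := by
  classical
  have hKmeas : MeasurableSet K := hKc.isClosed.measurableSet
  have hK1 : μ K = 1 := by
    refine le_antisymm prob_le_one ?_
    have h := measure_union_le (μ := μ) K Kᶜ
    rw [Set.union_compl_self, measure_univ, hμK, add_zero] at h
    exact h
  have hae : ∀ᵐ x ∂μ, x ∈ K := by
    rw [MeasureTheory.ae_iff]
    exact hμK
  obtain ⟨C₁, hC₁⟩ := hKc.exists_bound_of_continuousOn hφc.continuousOn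
  have hInt : Integrable φ μ := by
    refine Integrable.mono' (integrable_const C₁) hφc.aestronglyMeasurable ?_
    filter_upwards [hae] with x hx
    exact hC₁ x hx
  obtain ⟨D, hD⟩ := Metric.isBounded_iff.mp hKc.isBounded
  have hvK : ∀ j, stVertex j ∈ K := stVertex_mem K hKne hKc hK
  have hAcomp : ∀ (n : ℕ) (w : Fin n → Fin 3), IsCompact (stWordMap w '' K) :=
    fun n w => hKc.image (stWordMap_continuous w)
  have hAmeas : ∀ (n : ℕ) (w : Fin n → Fin 3), MeasurableSet (stWordMap w '' K) :=
    fun n w => (hAcomp n w).isClosed.measurableSet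
  have hAsub : ∀ (n : ℕ) (w : Fin n → Fin 3), stWordMap w '' K ⊆ K := fun n w =>
    (Set.subset_iUnion (fun w : Fin n → Fin 3 => stWordMap w '' K) w).trans_eq
      (stK_eq_iUnion K hK n).symm
  -- pairwise a.e. disjointness
  have hdisj : ∀ n : ℕ,
      Pairwise (Function.onFun (MeasureTheory.AEDisjoint μ) fun w : Fin n → Fin 3 => stWordMap w '' K) := by
    intro n w w' hne
    set p : ℝ≥0∞ := (1/3 : ℝ≥0∞)^n with hpdef
    set s : Finset (Fin n → Fin 3) := (Finset.univ.erase w).erase w' with hs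
    set t : ℝ≥0∞ := ∑ v ∈ s, μ (stWordMap v '' K) with ht
    have hw's : w' ∈ Finset.univ.erase w := Finset.mem_erase.2 ⟨hne.symm, Finset.mem_univ _⟩
    have h31 : (3 : ℝ≥0∞) * (1/3) = 1 := by
      rw [one_div, ENNReal.mul_inv_cancel] <;> norm_num
    have hsum_univ : ∑ v : Fin n → Fin 3, μ (stWordMap v '' K) = 1 := by
      simp only [hμ n]
      rw [Finset.sum_const, Finset.card_univ, Fintype.card_fun, Fintype.card_fin,
        Fintype.card_fin, nsmul_eq_mul]
      push_cast
      rw [← mul_pow, h31, one_pow]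
    have hsplit : p + (p + t) = 1 := by
      have he : ∑ v : Fin n → Fin 3, μ (stWordMap v '' K)
          = μ (stWordMap w '' K) + (μ (stWordMap w' '' K) + t) := by
        rw [← Finset.add_sum_erase _ _ (Finset.mem_univ w), ← Finset.add_sum_erase _ _ hw's]
      rw [← hsum_univ, he, hμ n w, hμ n w']
    have hcover : (1:ℝ≥0∞) ≤ μ (stWordMap w '' K ∪ stWordMap w' '' K) + t := by
      have hsub2 : K ⊆ (stWordMap w '' K ∪ stWordMap w' '' K) ∪ ⋃ v ∈ s, stWordMap v '' K := by
        intro x hx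
        rw [stK_eq_iUnion K hK n] at hx
        · obtain ⟨v, hv⟩ := Set.mem_iUnion.1 hx
          rcases eq_or_ne v w with rfl | h1
          · exact Set.mem_union_left _ (Set.mem_union_left _ hv)
          rcases eq_or_ne v w' with rfl | h2
          · exact Set.mem_union_left _ (Set.mem_union_right _ hv)
          refine Set.mem_union_right _ ?_
          exact Set.mem_biUnion (Finset.mem_erase.2 ⟨h2, Finset.mem_erase.2 ⟨h1, Finset.mem_univ _⟩⟩) hv
      calc (1:ℝ≥0∞) = μ K := hK1.symm
        _ ≤ μ ((stWordMap w '' K ∪ stWordMap w' '' K) ∪ ⋃ v ∈ s, stWordMap v '' K) :=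
            measure_mono hsub2
        _ ≤ μ (stWordMap w '' K ∪ stWordMap w' '' K) + μ (⋃ v ∈ s, stWordMap v '' K) :=
            measure_union_le _ _
        _ ≤ μ (stWordMap w '' K ∪ stWordMap w' '' K) + t := by
            gcongr
            exact measure_biUnion_finset_le s _
    have hui : μ (stWordMap w '' K ∪ stWordMap w' '' K) + μ (stWordMap w '' K ∩ stWordMap w' '' K)
        = p + p := by
      rw [measure_union_add_inter _ (hAmeas n w'), hμ n w, hμ n w']
    have hfin : μ (stWordMap w '' K ∪ stWordMap w' '' K) + t ≠ ⊤ := by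
      apply ENNReal.add_ne_top.2
      constructor
      · exact (prob_le_one.trans_lt ENNReal.one_lt_top).ne
      · refine (lt_of_le_of_lt ?_ ENNReal.one_lt_top).ne
        calc t ≤ ∑ v : Fin n → Fin 3, μ (stWordMap v '' K) :=
              Finset.sum_le_sum_of_subset (Finset.subset_univ s)
          _ = 1 := hsum_univ
    have hkey : (μ (stWordMap w '' K ∪ stWordMap w' '' K) + t)
        + μ (stWordMap w '' K ∩ stWordMap w' '' K)
        ≤ (μ (stWordMap w '' K ∪ stWordMap w' '' K) + t) + 0 := by
      rw [add_zero]
      calc (μ (stWordMap w '' K ∪ stWordMap w' '' K) + t)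
            + μ (stWordMap w '' K ∩ stWordMap w' '' K)
          = (μ (stWordMap w '' K ∪ stWordMap w' '' K)
            + μ (stWordMap w '' K ∩ stWordMap w' '' K)) + t := by ring
        _ = (p + p) + t := by rw [hui]
        _ = p + (p + t) := by ring
        _ = 1 := hsplit
        _ ≤ μ (stWordMap w '' K ∪ stWordMap w' '' K) + t := hcover
    have := ENNReal.le_of_add_le_add_left hfin hkey
    exact le_antisymm (by simpa using this) (zero_le)
  have hIeq : ∀ n : ℕ, ∫ x, φ x ∂μ = ∑ w : Fin n → Fin 3, ∫ x in stWordMap w '' K, φ x ∂μ := by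
    intro n
    have h1 : ∫ x, φ x ∂μ = ∫ x in K, φ x ∂μ := by
      rw [← integral_add_compl hKmeas hInt, setIntegral_measure_zero _ hμK, add_zero]
    have h2 : ∫ x in K, φ x ∂μ = ∫ x in ⋃ w : Fin n → Fin 3, stWordMap w '' K, φ x ∂μ := by
      rw [← stK_eq_iUnion K hK n]
    rw [h1, h2, integral_iUnion_ae (fun w => (hAmeas n w).nullMeasurableSet) (hdisj n)
      (hInt.integrableOn), tsum_fintype]
  have hptoReal : ∀ n : ℕ, ((1/3:ℝ≥0∞)^n).toReal = (1/3:ℝ)^n := by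
    intro n
    rw [ENNReal.toReal_pow]
    norm_num
  rw [Metric.tendsto_atTop]
  intro ε hε
  have hucont := hKc.uniformContinuousOn_of_continuous hφc.continuousOn
  rw [Metric.uniformContinuousOn_iff] at hucont
  obtain ⟨δ, hδ, hδ'⟩ := hucont (ε/2) (by positivity)
  have htend0 : Filter.Tendsto (fun n : ℕ => (1/2:ℝ)^n * D) Filter.atTop (nhds 0) := by
    simpa using (tendsto_pow_atTop_nhds_zero_of_lt_one (by norm_num : (0:ℝ) ≤ 1/2)
      (by norm_num : (1/2:ℝ) < 1)).mul_const D
  obtain ⟨N, hN⟩ := Filter.eventually_atTop.mp (htend0.eventually (gt_mem_nhds hδ))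
  refine ⟨N, fun n hn => ?_⟩
  rw [Real.dist_eq]
  have hcell : ∀ w : Fin n → Fin 3,
      |(1/(3:ℝ)^(n+1)) * ∑ j : Fin 3, φ (stWordMap w (stVertex j))
        - ∫ x in stWordMap w '' K, φ x ∂μ| ≤ (1/3:ℝ)^n * (ε/2) := by
    intro w
    have hjj : ∀ j : Fin 3, |(1/3:ℝ)^n * φ (stWordMap w (stVertex j))
        - ∫ x in stWordMap w '' K, φ x ∂μ| ≤ (1/3:ℝ)^n * (ε/2) := by
      intro j
      have hqmem : stWordMap w (stVertex j) ∈ stWordMap w '' K :=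
        Set.mem_image_of_mem _ (hvK j)
      have hconst : ∫ _x in stWordMap w '' K, φ (stWordMap w (stVertex j)) ∂μ
          = (1/3:ℝ)^n * φ (stWordMap w (stVertex j)) := by
        rw [setIntegral_const, measureReal_def, hμ n w, hptoReal n, smul_eq_mul]
      have heq : (1/3:ℝ)^n * φ (stWordMap w (stVertex j))
          - ∫ x in stWordMap w '' K, φ x ∂μ
          = ∫ x in stWordMap w '' K, (φ (stWordMap w (stVertex j)) - φ x) ∂μ := by
        rw [integral_sub (integrableOn_const (C := φ (stWordMap w (stVertex j))) (measure_lt_top μ _).ne)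
          hInt.integrableOn, hconst]
      rw [heq]
      have hbd : ∀ x ∈ stWordMap w '' K, ‖φ (stWordMap w (stVertex j)) - φ x‖ ≤ ε/2 := by
        intro x hx
        have hxK : x ∈ K := hAsub n w hx
        have hqK : stWordMap w (stVertex j) ∈ K := hAsub n w hqmem
        have hdist : dist (stWordMap w (stVertex j)) x ≤ (1/2:ℝ)^n * D := by
          obtain ⟨y, hy, rfl⟩ := hx
          rw [dist_stWordMap]
          have : dist (stVertex j) y ≤ D := hD (hvK j) hy
          have h2n : (0:ℝ) < (1/2:ℝ)^n := by positivity
          nlinarith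
        have := hδ' _ hqK _ hxK (lt_of_le_of_lt hdist (hN n hn))
        rw [Real.dist_eq] at this
        rw [Real.norm_eq_abs]
        exact this.le
      have := norm_setIntegral_le_of_norm_le_const (measure_lt_top μ _) hbd
      rw [Real.norm_eq_abs] at this
      refine this.trans ?_
      rw [measureReal_def, hμ n w, hptoReal n]
      ring_nf
      exact le_refl _
    have hsum : (1/(3:ℝ)^(n+1)) * ∑ j : Fin 3, φ (stWordMap w (stVertex j))
        - ∫ x in stWordMap w '' K, φ x ∂μ
        = (1/3:ℝ) * ∑ j : Fin 3, ((1/3:ℝ)^n * φ (stWordMap w (stVertex j))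
          - ∫ x in stWordMap w '' K, φ x ∂μ) := by
      rw [Fin.sum_univ_three, Fin.sum_univ_three, pow_succ, one_div_pow]
      ring
    rw [hsum, abs_mul, abs_of_pos (by norm_num : (0:ℝ) < 1/3)]
    refine le_trans (mul_le_mul_of_nonneg_left
      ((Finset.abs_sum_le_sum_abs _ _).trans
        (Finset.sum_le_sum (fun j _ => hjj j))) (by norm_num : (0:ℝ) ≤ 1/3)) ?_
    rw [Finset.sum_const, Finset.card_univ, Fintype.card_fin, nsmul_eq_mul]
    push_cast
    ring_nf
    exact le_refl _
  have htot : |stQuad φ n - ∫ x, φ x ∂μ| ≤ ε/2 := by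
    rw [hIeq n]
    unfold stQuad
    rw [Finset.mul_sum, ← Finset.sum_sub_distrib]
    refine le_trans (Finset.abs_sum_le_sum_abs _ _)
      (le_trans (Finset.sum_le_sum (fun w _ => hcell w)) ?_)
    rw [Finset.sum_const, Finset.card_univ, Fintype.card_fun, Fintype.card_fin, Fintype.card_fin,
      nsmul_eq_mul]
    push_cast
    rw [← mul_assoc, ← mul_pow]
    norm_num
  calc |stQuad φ n - ∫ x, φ x ∂μ| ≤ ε/2 := htot
    _ < ε := by linarith


/-- if `φ ∈ C(K)` extends to a function on the plane which is twice
continuously differentiable along each of the three edge directions of the triangle,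
with uniformly bounded second directional derivatives, then the vertex quadrature
satisfies `|∫_K φ dμ − S_N| = O(h²)`, `h = 2^{−m}`. -/
theorem stmt15 (K : Set (ℝ × ℝ)) (hKne : K.Nonempty) (hKc : IsCompact K)
    (hK : K = ⋃ i, stMap i '' K)
    (μ : Measure (ℝ × ℝ)) [IsProbabilityMeasure μ] (hμK : μ Kᶜ = 0)
    (hμ : ∀ (m : ℕ) (w : Fin m → Fin 3), μ (stWordMap w '' K) = (1 / 3 : ℝ≥0∞) ^ m)
    (φ : ℝ × ℝ → ℝ) (hφc : Continuous φ) (M : ℝ)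
    (hdir : ∀ i j : Fin 3, i ≠ j → ∀ x : ℝ × ℝ,
      ContDiff ℝ 2 (fun t : ℝ => φ (x + t • (stVertex j - stVertex i))))
    (hM : ∀ i j : Fin 3, i ≠ j → ∀ (x : ℝ × ℝ) (t : ℝ),
      |iteratedDeriv 2 (fun s : ℝ => φ (x + s • (stVertex j - stVertex i))) t| ≤ M) :
    ∃ C : ℝ, ∀ m : ℕ, |∫ x, φ x ∂μ - stQuad φ m| ≤ C * ((1 / 2 : ℝ) ^ m) ^ 2 := by
  classical
  set M' : ℝ := max M 0 with hM'
  have hM0 : 0 ≤ M' := le_max_right _ _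
  have htend := quad_tendsto K hKne hKc hK μ hμK hμ φ hφc
  have hstep : ∀ k : ℕ, |stQuad φ (k+1) - stQuad φ k| ≤ M' * (1/4:ℝ)^k := by
    intro k
    have := step_bound φ M hdir hM k
    have hpow : ((1/2:ℝ)^k)^2 = (1/4:ℝ)^k := by
      rw [← pow_mul, mul_comm, pow_mul]
      norm_num
    rwa [hpow] at this
  refine ⟨M' * (4/3), fun m => ?_⟩
  have hgeo : ∀ p : ℕ, |stQuad φ (m+p) - stQuad φ m|
      ≤ ∑ k ∈ Finset.range p, M' * (1/4:ℝ)^(m+k) := by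
    intro p
    induction p with
    | zero => simp
    | succ p ih =>
        rw [Finset.sum_range_succ]
        calc |stQuad φ (m+(p+1)) - stQuad φ m|
            ≤ |stQuad φ (m+(p+1)) - stQuad φ (m+p)| + |stQuad φ (m+p) - stQuad φ m| :=
              abs_sub_le _ _ _
          _ ≤ M' * (1/4:ℝ)^(m+p) + ∑ k ∈ Finset.range p, M' * (1/4:ℝ)^(m+k) := by
              have h1 : m + (p+1) = (m+p) + 1 := by omega
              rw [h1]
              exact add_le_add (hstep (m+p)) ih
          _ = (∑ k ∈ Finset.range p, M' * (1/4:ℝ)^(m+k)) + M' * (1/4:ℝ)^(m+p) := by ring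
  have hbound : ∀ p : ℕ, |stQuad φ (m+p) - stQuad φ m| ≤ (M' * (4/3)) * ((1/2:ℝ)^m)^2 := by
    intro p
    refine (hgeo p).trans ?_
    have h1 : ∑ k ∈ Finset.range p, M' * (1/4:ℝ)^(m+k)
        = M' * (1/4:ℝ)^m * ∑ k ∈ Finset.range p, (1/4:ℝ)^k := by
      rw [Finset.mul_sum]
      refine Finset.sum_congr rfl (fun k _ => ?_)
      rw [pow_add]
      ring
    have h2 : ∑ k ∈ Finset.range p, (1/4:ℝ)^k ≤ 4/3 := by
      rw [geom_sum_eq (by norm_num : (1/4:ℝ) ≠ 1)]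
      have hp : (0:ℝ) ≤ (1/4:ℝ)^p := by positivity
      have he : ((1/4:ℝ)^p - 1)/((1/4:ℝ) - 1) = (1 - (1/4:ℝ)^p) * (4/3) := by ring
      rw [he]
      nlinarith
    have hpow : ((1/2:ℝ)^m)^2 = (1/4:ℝ)^m := by
      rw [← pow_mul, mul_comm, pow_mul]
      norm_num
    rw [h1, hpow]
    have h3 : (0:ℝ) ≤ M' * (1/4:ℝ)^m := by positivity
    calc M' * (1/4:ℝ)^m * ∑ k ∈ Finset.range p, (1/4:ℝ)^k
        ≤ M' * (1/4:ℝ)^m * (4/3) := mul_le_mul_of_nonneg_left h2 h3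
      _ = M' * (4/3) * (1/4:ℝ)^m := by ring
  have habs : Filter.Tendsto (fun n => |stQuad φ n - stQuad φ m|) Filter.atTop
      (nhds (|∫ x, φ x ∂μ - stQuad φ m|)) :=
    ((htend.sub_const (stQuad φ m)).abs)
  refine le_of_tendsto habs ?_
  filter_upwards [Filter.eventually_ge_atTop m] with n hn
  obtain ⟨p, rfl⟩ := Nat.exists_eq_add_of_le hn
  exact hbound p
end
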